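/- arXiv:1407.1669 — 4 statements merged into one kernel-verified Lean document; each statement's English description precedes it below -/
import Mathlib

section
/- Let Ω ⊆ R^N be a connected open set and let F ⊊ Ω be a nonempty proper relatively closed subset of Ω. Then there exist a point y ∈ Ω ∩ ∂F and a nonzero vector ν ∈ R^N such that the closed ball of center y+ν and radius |ν| is contained in Ω and intersects F exactly at the single point y. -/
open Metric RealInnerProductSpace

set_option maxHeartbeats 1000000

/-- If `Ω ⊆ ℝ^N` is a connected open set and `F` is a nonempty proper relatively
closed subset of `Ω`, then there exist `y ∈ Ω ∩ ∂F` and `ν ≠ 0` such that the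
closed ball of center `y + ν` and radius `|ν|` is contained in `Ω` and meets `F`
only at `y`. -/
theorem stmt3 {N : ℕ} (Ω F : Set (EuclideanSpace ℝ (Fin N)))
    (hΩo : IsOpen Ω) (hΩc : IsConnected Ω)
    (hFΩ : F ⊆ Ω) (hFrc : closure F ∩ Ω = F)
    (hFne : F.Nonempty) (hFprop : F ≠ Ω) :
    ∃ y ∈ Ω ∩ frontier F, ∃ ν : EuclideanSpace ℝ (Fin N), ν ≠ 0 ∧
      Metric.closedBall (y + ν) ‖ν‖ ⊆ Ω ∧
      Metric.closedBall (y + ν) ‖ν‖ ∩ F = {y} := by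
  classical
  -- F is not open
  have hFnotopen : ¬ IsOpen F := by
    intro hFo
    obtain ⟨x, hxΩ, hxF⟩ : ∃ x, x ∈ Ω ∧ x ∉ F := by
      by_contra h
      push_neg at h
      exact hFprop (Set.Subset.antisymm hFΩ h)
    have hsub : Ω ⊆ F ∪ (closure F)ᶜ := by
      intro w hw
      by_cases hwc : w ∈ closure F
      · exact Or.inl (hFrc ▸ ⟨hwc, hw⟩)
      · exact Or.inr hwc
    obtain ⟨x0, hx0F⟩ := hFne
    obtain ⟨w, hwΩ, hwF, hwc⟩ := hΩc.isPreconnected F (closure F)ᶜ hFo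
      (isOpen_compl_iff.mpr isClosed_closure) hsub ⟨x0, hFΩ hx0F, hx0F⟩
      ⟨x, hxΩ, fun hc => hxF (hFrc ▸ ⟨hc, hxΩ⟩)⟩
    exact hwc (subset_closure hwF)
  -- a point of F not in the interior of F
  obtain ⟨z, hzF, hzint⟩ : ∃ z ∈ F, z ∉ interior F := by
    by_contra h
    push_neg at h
    have : F = interior F := Set.Subset.antisymm h interior_subset
    exact hFnotopen (this ▸ isOpen_interior)
  have hzΩ : z ∈ Ω := hFΩ hzF
  have hzcl : z ∈ closure Fᶜ := by rwa [closure_compl, Set.mem_compl_iff]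
  -- a closed ball around z inside Ω
  obtain ⟨ε, hεpos, hε⟩ := Metric.isOpen_iff.mp hΩo z hzΩ
  set δ := ε / 2 with hδdef
  have hδpos : 0 < δ := by positivity
  have hδ : closedBall z δ ⊆ Ω :=
    (closedBall_subset_ball (by simp [hδdef]; linarith)).trans hε
  -- a point x₀ ∉ F near z
  obtain ⟨x₀, hx₀F, hdzx⟩ : ∃ x₀ ∈ Fᶜ, dist z x₀ < δ / 4 :=
    Metric.mem_closure_iff.mp hzcl (δ / 4) (by positivity)
  have hx₀Ω : x₀ ∈ Ω := hδ (by simp [mem_closedBall, dist_comm]; linarith)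
  set r := Metric.infDist x₀ F with hrdef
  have hx₀cl : x₀ ∉ closure F := fun hc => hx₀F (hFrc ▸ ⟨hc, hx₀Ω⟩)
  have hrpos : 0 < r := by
    have : 0 < Metric.infDist x₀ (closure F) :=
      (isClosed_closure.notMem_iff_infDist_pos hFne.closure).mp hx₀cl
    rwa [Metric.infDist_closure] at this
  have hrδ : r < δ / 4 := lt_of_le_of_lt (Metric.infDist_le_dist_of_mem hzF)
    (by rwa [dist_comm])
  have hmin : ∀ w ∈ F, r ≤ dist x₀ w := fun w hw => Metric.infDist_le_dist_of_mem hw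
  -- the big ball is in Ω
  have hball : closedBall x₀ (2 * r) ⊆ Ω := by
    intro w hw
    apply hδ
    rw [mem_closedBall] at hw ⊢
    calc dist w z ≤ dist w x₀ + dist x₀ z := dist_triangle _ _ _
      _ ≤ 2 * r + dist z x₀ := by rw [dist_comm x₀ z]; linarith
      _ ≤ δ := by linarith
  -- K = F ∩ big ball is compact and nonempty
  set K := F ∩ closedBall x₀ (2 * r) with hKdef
  have hKeq : K = closure F ∩ closedBall x₀ (2 * r) := by
    ext w
    constructor
    · rintro ⟨h1, h2⟩; exact ⟨subset_closure h1, h2⟩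
    · rintro ⟨h1, h2⟩; exact ⟨hFrc ▸ ⟨h1, hball h2⟩, h2⟩
  have hKc : IsCompact K := by
    rw [hKeq]
    exact (isCompact_closedBall _ _).inter_left isClosed_closure
  have hKne : K.Nonempty := by
    obtain ⟨w, hwF, hwd⟩ := (Metric.infDist_lt_iff hFne).mp
      (show Metric.infDist x₀ F < 2 * r by rw [← hrdef]; linarith)
    exact ⟨w, hwF, by rw [mem_closedBall, dist_comm]; linarith⟩
  obtain ⟨y, hyK, hyd⟩ := hKc.exists_infDist_eq_dist hKne x₀
  have hyF : y ∈ F := hyK.1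
  -- dist x₀ y = r
  have hKler : Metric.infDist x₀ K ≤ r := by
    by_contra h
    push_neg at h
    obtain ⟨w, hwF, hwd⟩ := (Metric.infDist_lt_iff hFne).mp
      (show Metric.infDist x₀ F < min (Metric.infDist x₀ K) (2 * r) by
        rw [← hrdef, lt_min_iff]; exact ⟨h, by linarith⟩)
    have hwK : w ∈ K := ⟨hwF, by
      rw [mem_closedBall, dist_comm]
      exact le_of_lt (lt_of_lt_of_le hwd (min_le_right _ _))⟩
    have h1 := Metric.infDist_le_dist_of_mem (x := x₀) hwK
    have h2 := lt_of_lt_of_le hwd (min_le_left _ _)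
    linarith
  have hyr : dist x₀ y = r := le_antisymm (hyd ▸ hKler) (hmin y hyF)
  -- define ν and c
  set ν : EuclideanSpace ℝ (Fin N) := (2:ℝ)⁻¹ • (x₀ - y) with hνdef
  have hnormxy : ‖x₀ - y‖ = r := by rw [← dist_eq_norm]; exact hyr
  have hνnorm : ‖ν‖ = r / 2 := by
    rw [hνdef, norm_smul, hnormxy]
    simp; ring
  have hν0 : ν ≠ 0 := by
    intro h
    rw [h, norm_zero] at hνnorm
    linarith
  set c := y + ν with hcdef
  have hcx₀ : dist c x₀ = r / 2 := by
    have : c - x₀ = (2:ℝ)⁻¹ • (y - x₀) := by rw [hcdef, hνdef]; module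
    rw [dist_eq_norm, this, norm_smul, ← dist_eq_norm, dist_comm, hyr]
    simp; ring
  have hcy : dist c y = r / 2 := by
    have : c - y = ν := by rw [hcdef]; abel
    rw [dist_eq_norm, this, hνnorm]
  refine ⟨y, ⟨hFΩ hyF, subset_closure hyF, ?_⟩, ν, hν0, ?_, ?_⟩
  · -- y ∉ interior F
    intro hyint
    obtain ⟨ρ, hρpos, hρ⟩ := Metric.isOpen_iff.mp isOpen_interior y hyint
    set t := min (ρ / (2 * r)) (1 / 2) with htdef
    have htpos : 0 < t := by
      apply lt_min
      · positivity
      · norm_num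
    have htle : t ≤ 1 / 2 := min_le_right _ _
    set w := y + t • (x₀ - y) with hwdef
    have hwy : dist w y = t * r := by
      have : w - y = t • (x₀ - y) := by rw [hwdef]; abel
      rw [dist_eq_norm, this, norm_smul, hnormxy, Real.norm_eq_abs,
        abs_of_pos htpos]
    have hwF : w ∈ F := interior_subset (hρ (by
      rw [mem_ball, hwy]
      have : t * r ≤ (ρ / (2 * r)) * r := by
        apply mul_le_mul_of_nonneg_right (min_le_left _ _) (le_of_lt hrpos)
      have h2 : (ρ / (2 * r)) * r = ρ / 2 := by field_simp
      linarith))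
    have hwd : dist x₀ w = (1 - t) * r := by
      have : x₀ - w = (1 - t) • (x₀ - y) := by rw [hwdef]; module
      rw [dist_eq_norm, this, norm_smul, hnormxy, Real.norm_eq_abs,
        abs_of_pos (by linarith : (0:ℝ) < 1 - t)]
    have := hmin w hwF
    rw [hwd] at this
    nlinarith
  · -- ball ⊆ Ω
    rw [hνnorm, ← hcdef]
    intro w hw
    apply hball
    rw [mem_closedBall] at hw ⊢
    calc dist w x₀ ≤ dist w c + dist c x₀ := dist_triangle _ _ _
      _ ≤ r / 2 + r / 2 := by linarith [hw, hcx₀.le]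
      _ ≤ 2 * r := by linarith
  · -- intersection is {y}
    rw [hνnorm, ← hcdef]
    ext w
    simp only [Set.mem_inter_iff, mem_closedBall, Set.mem_singleton_iff]
    constructor
    · rintro ⟨hwc, hwF⟩
      set u := x₀ - w with hudef
      set v := x₀ - y with hvdef
      have hur : r ≤ ‖u‖ := by rw [hudef, ← dist_eq_norm]; exact hmin w hwF
      have hvr : ‖v‖ = r := hnormxy
      have hwceq : w - c = (2:ℝ)⁻¹ • v - u := by
        rw [hudef, hvdef, hcdef, hνdef]; module
      have hsq : ‖(2:ℝ)⁻¹ • v - u‖ ^ 2 ≤ (r / 2) ^ 2 := by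
        rw [← hwceq]
        have h1 : ‖w - c‖ ≤ r / 2 := by rw [← dist_eq_norm]; exact hwc
        have h2 : (0:ℝ) ≤ ‖w - c‖ := norm_nonneg _
        nlinarith
      have hexp : ‖(2:ℝ)⁻¹ • v - u‖ ^ 2
          = (r / 2) ^ 2 - ⟪v, u⟫ + ‖u‖ ^ 2 := by
        rw [norm_sub_sq_real, norm_smul, real_inner_smul_left, hvr]
        simp [Real.norm_eq_abs]
        ring
      rw [hexp] at hsq
      have hinner : ‖u‖ ^ 2 ≤ ⟪v, u⟫ := by linarith
      have hcs : ⟪v, u⟫ ≤ ‖v‖ * ‖u‖ := real_inner_le_norm v u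
      have hule : ‖u‖ ≤ r := by nlinarith [hinner, hcs, hvr, hur, norm_nonneg u]
      have hur' : ‖u‖ = r := le_antisymm hule hur
      have heq : ⟪v, u⟫ = ‖v‖ * ‖u‖ := by
        rw [hvr, hur']
        nlinarith [hinner, hcs, hvr, hur']
      have := inner_eq_norm_mul_iff_real.mp heq
      rw [hvr, hur'] at this
      have huv : u = v := (smul_right_injective _ (ne_of_gt hrpos) this).symm
      have hxy : x₀ - w = x₀ - y := by rw [← hudef, ← hvdef, huv]
      exact sub_right_injective hxy
    · rintro rfl
      exact ⟨by rw [dist_comm]; exact hcy.le, hyF⟩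
end

section
/- Hopf-type Lemma: Let L = ∑_{i,j} a_{ij}(x)∂_i∂_j + ∑_j b_j(x)∂_j on R^N with continuous coefficients and A(x) = (a_{ij}(x)) symmetric positive semidefinite at every point. Let Ω ⊆ R^N be a connected open set and u ∈ C²(Ω) satisfy Lu ≥ 0 on Ω, and suppose F(u) := {x ∈ Ω : u(x) = max_Ω u} is a nonempty proper subset of Ω. Then for every y ∈ Ω ∩ ∂F(u) and every nonzero ν ∈ R^N such that B̄(y+ν,|ν|) ⊆ Ω and B̄(y+ν,|ν|) ∩ F(u) = {y}, one has ⟨A(y)ν, ν⟩ = 0. -/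
open Matrix

/-- First-order partial derivative `∂_j f (x)`. -/
noncomputable def pd {N : ℕ} (f : EuclideanSpace ℝ (Fin N) → ℝ) (j : Fin N)
    (x : EuclideanSpace ℝ (Fin N)) : ℝ :=
  fderiv ℝ f x (EuclideanSpace.single j 1)

/-- Second-order partial derivative `∂_i ∂_j f (x)`. -/
noncomputable def pd2 {N : ℕ} (f : EuclideanSpace ℝ (Fin N) → ℝ) (i j : Fin N)
    (x : EuclideanSpace ℝ (Fin N)) : ℝ :=
  fderiv ℝ (fun z => pd f j z) x (EuclideanSpace.single i 1)



lemma sum_coord {N : ℕ} {ι : Type*} (s : Finset ι) (v : ι → EuclideanSpace ℝ (Fin N)) (i : Fin N) :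
    (∑ x ∈ s, v x) i = ∑ x ∈ s, v x i := by
  induction s using Finset.cons_induction with
  | empty => rfl
  | cons a s ha ih => rw [Finset.sum_cons, Finset.sum_cons, ← ih]; rfl

lemma expand_basis {N : ℕ} (ξ : EuclideanSpace ℝ (Fin N)) :
    ξ = ∑ j, ξ j • EuclideanSpace.single j (1:ℝ) := by
  ext i
  rw [sum_coord]
  simp [EuclideanSpace.single_apply]

lemma fderiv_apply_eq_sum {N : ℕ} (f : EuclideanSpace ℝ (Fin N) → ℝ)
    (x ξ : EuclideanSpace ℝ (Fin N)) :
    fderiv ℝ f x ξ = ∑ j, ξ j * pd f j x := by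
  conv_lhs => rw [expand_basis ξ]
  rw [map_sum]
  simp [pd, smul_eq_mul]

/-- derivative of `t ↦ f (x + t • ξ)` -/
lemma hasDerivAt_line {N : ℕ} (f : EuclideanSpace ℝ (Fin N) → ℝ)
    (x ξ : EuclideanSpace ℝ (Fin N)) (t : ℝ)
    (hf : DifferentiableAt ℝ f (x + t • ξ)) :
    HasDerivAt (fun s : ℝ => f (x + s • ξ)) (∑ j, ξ j * pd f j (x + t • ξ)) t := by
  have hline : HasDerivAt (fun s : ℝ => x + s • ξ) ξ t := by
    simpa using ((hasDerivAt_id t).smul_const ξ).const_add x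
  have := (hf.hasFDerivAt).comp_hasDerivAt t hline
  rwa [fderiv_apply_eq_sum] at this


lemma eventually_gt_of_hasDerivAt_pos {g : ℝ → ℝ} {c t0 : ℝ}
    (h : HasDerivAt g c t0) (hc : 0 < c) :
    ∀ᶠ t in nhdsWithin t0 (Set.Ioi t0), g t0 < g t := by
  have hs := hasDerivAt_iff_tendsto_slope.1 h
  have hpos : ∀ᶠ t in nhdsWithin t0 {t0}ᶜ, 0 < slope g t0 t :=
    hs.eventually (eventually_gt_nhds hc)
  have hmono : nhdsWithin t0 (Set.Ioi t0) ≤ nhdsWithin t0 {t0}ᶜ := by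
    apply nhdsWithin_mono
    intro t ht
    exact ne_of_gt ht
  filter_upwards [hmono hpos, self_mem_nhdsWithin] with t ht ht'
  have h1 : 0 < t - t0 := sub_pos.2 ht'
  have := mul_pos ht h1
  rw [slope_def_field] at this
  have : 0 < g t - g t0 := by
    field_simp at this
    linarith [this]
  linarith


lemma pd_differentiableOn {N : ℕ} {f : EuclideanSpace ℝ (Fin N) → ℝ}
    {Ω : Set (EuclideanSpace ℝ (Fin N))} (hΩo : IsOpen Ω)
    (hf : ContDiffOn ℝ 2 f Ω) (j : Fin N) :
    DifferentiableOn ℝ (fun z => pd f j z) Ω := by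
  have h1 : ContDiffOn ℝ 1 (fderiv ℝ f) Ω := by
    have : ContDiffOn ℝ 1 (fderiv ℝ f) Ω := hf.fderiv_of_isOpen hΩo (by norm_num)
    exact this
  have h2 : ContDiffOn ℝ 1 (fun z => pd f j z) Ω := by
    have hc : ContDiff ℝ 1 (fun L : EuclideanSpace ℝ (Fin N) →L[ℝ] ℝ =>
        L (EuclideanSpace.single j 1)) :=
      (ContinuousLinearMap.apply ℝ ℝ (EuclideanSpace.single j (1:ℝ))).contDiff
    exact hc.comp_contDiffOn h1
  exact h2.differentiableOn (by norm_num)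

lemma diffAt_of_contDiffOn {N : ℕ} {f : EuclideanSpace ℝ (Fin N) → ℝ}
    {Ω : Set (EuclideanSpace ℝ (Fin N))} (hΩo : IsOpen Ω)
    (hf : ContDiffOn ℝ 2 f Ω) {p : EuclideanSpace ℝ (Fin N)} (hp : p ∈ Ω) :
    DifferentiableAt ℝ f p :=
  ((hf.differentiableOn (by norm_num)) p hp).differentiableAt (hΩo.mem_nhds hp)

lemma quadform_nonpos_at_localMax {N : ℕ} {w : EuclideanSpace ℝ (Fin N) → ℝ}
    {Ω : Set (EuclideanSpace ℝ (Fin N))} (hΩo : IsOpen Ω)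
    (hw : ContDiffOn ℝ 2 w Ω) {x0 : EuclideanSpace ℝ (Fin N)} (hx0 : x0 ∈ Ω)
    (hmax : IsLocalMax w x0) (ξ : EuclideanSpace ℝ (Fin N)) :
    ∑ i, ∑ j, ξ i * ξ j * pd2 w i j x0 ≤ 0 := by
  by_contra hQ
  push_neg at hQ
  set Q : ℝ := ∑ i, ∑ j, ξ i * ξ j * pd2 w i j x0 with hQdef
  -- the line map
  set γ : ℝ → EuclideanSpace ℝ (Fin N) := fun t => x0 + t • ξ with hγ
  have hγcont : Continuous γ := by
    apply Continuous.add continuous_const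
    exact (continuous_id.smul continuous_const)
  have hγ0 : γ 0 = x0 := by simp [hγ]
  -- g and h
  set g : ℝ → ℝ := fun t => w (γ t) with hg
  set h : ℝ → ℝ := fun t => ∑ j, ξ j * pd w j (γ t) with hh
  -- derivative of g is h, wherever γ t ∈ Ω
  have hgd : ∀ t, γ t ∈ Ω → HasDerivAt g (h t) t := fun t ht =>
    hasDerivAt_line w x0 ξ t (diffAt_of_contDiffOn hΩo hw ht)
  -- derivative of h at 0 is Q
  have hpd_diff : ∀ j, ∀ t, γ t ∈ Ω → DifferentiableAt ℝ (fun z => pd w j z) (γ t) :=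
    fun j t ht => ((pd_differentiableOn hΩo hw j) _ ht).differentiableAt (hΩo.mem_nhds ht)
  have hhd : HasDerivAt h Q 0 := by
    have : ∀ j ∈ Finset.univ, HasDerivAt (fun t => ξ j * pd w j (γ t))
        (ξ j * ∑ i, ξ i * pd2 w i j x0) 0 := by
      intro j _
      have := hasDerivAt_line (fun z => pd w j z) x0 ξ 0 (by simpa [hγ0] using hpd_diff j 0 (by rw [hγ0]; exact hx0))
      have h2 : (∑ i, ξ i * pd (fun z => pd w j z) i (γ 0)) = ∑ i, ξ i * pd2 w i j x0 := by
        rw [hγ0]; rfl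
      exact (h2 ▸ this).const_mul (ξ j)
    have hs := HasDerivAt.fun_sum this
    have : (∑ j, ξ j * ∑ i, ξ i * pd2 w i j x0) = Q := by
      rw [hQdef, Finset.sum_comm]
      congr 1; ext j; rw [Finset.mul_sum]; congr 1; ext i; ring
    exact this ▸ hs
  have hh0 : h 0 = 0 := by
    have hfd : fderiv ℝ w x0 = 0 := hmax.fderiv_eq_zero
    simp [hh, hγ0, pd, hfd]
  -- h is eventually positive to the right of 0
  have hev := eventually_gt_of_hasDerivAt_pos hhd hQ
  rw [hh0] at hev
  obtain ⟨c, hc, hIoo⟩ := mem_nhdsGT_iff_exists_Ioo_subset.1 hev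
  -- neighbourhood of 0 where γ t ∈ Ω and g t ≤ g 0
  have hγΩ : ∀ᶠ t in nhds (0:ℝ), γ t ∈ Ω := by
    have : γ ⁻¹' Ω ∈ nhds (0:ℝ) :=
      hγcont.continuousAt.preimage_mem_nhds (by rw [hγ0]; exact hΩo.mem_nhds hx0)
    exact this
  have hgmax : ∀ᶠ t in nhds (0:ℝ), g t ≤ g 0 := by
    have : ∀ᶠ t in nhds (0:ℝ), w (γ t) ≤ w x0 :=
      hγcont.continuousAt.eventually (by rw [hγ0]; exact hmax)
    simpa [hg, hγ0] using this
  obtain ⟨ε, hε, hball⟩ := Metric.eventually_nhds_iff.1 (hγΩ.and hgmax)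
  set t1 : ℝ := min (ε/2) (c/2) with ht1
  have ht1pos : 0 < t1 := lt_min (by linarith) (by simpa using half_pos (by exact lt_of_le_of_lt (le_refl _) hc : (0:ℝ) < c))
  have hmem : ∀ t ∈ Set.Icc (0:ℝ) t1, γ t ∈ Ω ∧ g t ≤ g 0 := by
    intro t ⟨h0t, htt1⟩
    apply hball
    rw [Real.dist_eq, sub_zero, abs_of_nonneg h0t]
    calc t ≤ t1 := htt1
      _ ≤ ε/2 := min_le_left _ _
      _ < ε := by linarith
  -- g is strictly monotone on [0, t1]
  have hsm : StrictMonoOn g (Set.Icc 0 t1) := by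
    apply strictMonoOn_of_deriv_pos (convex_Icc 0 t1)
    · intro t ht
      exact ((hgd t (hmem t ht).1).differentiableAt).continuousAt.continuousWithinAt
    · intro t ht
      rw [interior_Icc] at ht
      have htΩ : γ t ∈ Ω := (hmem t ⟨le_of_lt ht.1, le_of_lt ht.2⟩).1
      rw [(hgd t htΩ).deriv]
      apply hIoo
      constructor
      · exact ht.1
      · have hcpos : (0:ℝ) < c := hc
        have h1 : t1 ≤ c/2 := min_le_right _ _
        have := ht.2
        simp only [Set.mem_Ioi] at *
        linarith
  have := hsm (Set.left_mem_Icc.2 (le_of_lt ht1pos)) (Set.right_mem_Icc.2 (le_of_lt ht1pos)) ht1pos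
  have hle := (hmem t1 (Set.right_mem_Icc.2 (le_of_lt ht1pos))).2
  linarith

open scoped MatrixOrder in
lemma trace_pairing_nonpos {N : ℕ} (A : Matrix (Fin N) (Fin N) ℝ) (hA : A.PosSemidef)
    (H : Matrix (Fin N) (Fin N) ℝ)
    (hH : ∀ ξ : Fin N → ℝ, ∑ i, ∑ j, ξ i * ξ j * H i j ≤ 0) :
    ∑ i, ∑ j, A i j * H i j ≤ 0 := by
  set S := CFC.sqrt A with hS
  have hSsym : ∀ i j, S i j = S j i := by
    intro i j
    have := (CFC.sqrt_nonneg A).posSemidef.1.apply j i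
    simpa using this
  have hSS : ∀ i j, A i j = ∑ k, S k i * S k j := by
    intro i j
    have h2 : S * S = A := by
      exact CFC.sqrt_mul_sqrt_self A hA.nonneg
    rw [← h2, Matrix.mul_apply]
    congr 1; ext k; rw [hSsym i k]
  calc ∑ i, ∑ j, A i j * H i j
      = ∑ i, ∑ j, ∑ k, S k i * S k j * H i j := by
        apply Finset.sum_congr rfl; intro i _
        apply Finset.sum_congr rfl; intro j _
        rw [hSS i j, Finset.sum_mul]
    _ = ∑ i, ∑ k, ∑ j, S k i * S k j * H i j := by
        apply Finset.sum_congr rfl; intro i _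
        exact Finset.sum_comm
    _ = ∑ k, ∑ i, ∑ j, S k i * S k j * H i j := Finset.sum_comm
    _ ≤ 0 := by
        apply Finset.sum_nonpos
        intro k _
        exact hH (fun i => S k i)

lemma localMax_operator_nonpos {N : ℕ}
    (a : EuclideanSpace ℝ (Fin N) → Matrix (Fin N) (Fin N) ℝ)
    (b : EuclideanSpace ℝ (Fin N) → Fin N → ℝ)
    (hPSD : ∀ x, (a x).PosSemidef)
    {Ω : Set (EuclideanSpace ℝ (Fin N))} (hΩo : IsOpen Ω)
    {w : EuclideanSpace ℝ (Fin N) → ℝ} (hw : ContDiffOn ℝ 2 w Ω)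
    {x0 : EuclideanSpace ℝ (Fin N)} (hx0 : x0 ∈ Ω) (hmax : IsLocalMax w x0) :
    (∑ i, ∑ j, a x0 i j * pd2 w i j x0) + ∑ j, b x0 j * pd w j x0 ≤ 0 := by
  have hpd0 : ∀ j, pd w j x0 = 0 := by
    intro j
    simp [pd, hmax.fderiv_eq_zero]
  have h2 : ∑ j, b x0 j * pd w j x0 = 0 := by
    apply Finset.sum_eq_zero; intro j _; rw [hpd0 j, mul_zero]
  rw [h2, add_zero]
  exact trace_pairing_nonpos (a x0) (hPSD x0) (Matrix.of fun i j => pd2 w i j x0)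
    (fun ξ => quadform_nonpos_at_localMax hΩo hw hx0 hmax (WithLp.toLp 2 ξ))

lemma exists_boundary_max {N : ℕ}
    (a : EuclideanSpace ℝ (Fin N) → Matrix (Fin N) (Fin N) ℝ)
    (b : EuclideanSpace ℝ (Fin N) → Fin N → ℝ)
    (hPSD : ∀ x, (a x).PosSemidef)
    {Ω : Set (EuclideanSpace ℝ (Fin N))} (hΩo : IsOpen Ω)
    {w : EuclideanSpace ℝ (Fin N) → ℝ} (hw : ContDiffOn ℝ 2 w Ω)
    (D : Set (EuclideanSpace ℝ (Fin N))) (hDo : IsOpen D)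
    (hDb : Bornology.IsBounded D) (hDne : D.Nonempty) (hDΩ : closure D ⊆ Ω)
    (hstrict : ∀ x ∈ D,
      0 < (∑ i, ∑ j, a x i j * pd2 w i j x) + ∑ j, b x j * pd w j x) :
    ∃ x0 ∈ closure D \ D, ∀ x ∈ closure D, w x ≤ w x0 := by
  have hcomp : IsCompact (closure D) := hDb.isCompact_closure
  have hcont : ContinuousOn w (closure D) :=
    (hw.continuousOn).mono hDΩ
  obtain ⟨x0, hx0mem, hx0max⟩ :=
    hcomp.exists_isMaxOn (hDne.mono subset_closure) hcont
  by_cases hx0D : x0 ∈ D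
  · exfalso
    have hmax : IsLocalMax w x0 := by
      filter_upwards [hDo.mem_nhds hx0D] with x hx
      exact hx0max (subset_closure hx)
    have := localMax_operator_nonpos a b hPSD hΩo hw (hDΩ (subset_closure hx0D)) hmax
    linarith [hstrict x0 hx0D]
  · exact ⟨x0, ⟨hx0mem, hx0D⟩, fun x hx => hx0max hx⟩

section Barrier

variable {N : ℕ} (z : EuclideanSpace ℝ (Fin N)) (α : ℝ)

noncomputable def qf (x : EuclideanSpace ℝ (Fin N)) : ℝ := ∑ k, (x k - z k)^2

noncomputable def qL (x : EuclideanSpace ℝ (Fin N)) :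
    EuclideanSpace ℝ (Fin N) →L[ℝ] ℝ :=
  ∑ k, (2*(x k - z k)) • (EuclideanSpace.proj k : EuclideanSpace ℝ (Fin N) →L[ℝ] ℝ)

lemma hasFDerivAt_qf (x : EuclideanSpace ℝ (Fin N)) :
    HasFDerivAt (qf z) (qL z x) x := by
  have h : ∀ k : Fin N, HasFDerivAt (fun x : EuclideanSpace ℝ (Fin N) => x k - z k)
      (EuclideanSpace.proj k : EuclideanSpace ℝ (Fin N) →L[ℝ] ℝ) x := by
    intro k
    exact ((EuclideanSpace.proj k : EuclideanSpace ℝ (Fin N) →L[ℝ] ℝ).hasFDerivAt).sub_const (z k)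
  have h2 : ∀ k ∈ Finset.univ, HasFDerivAt
      (fun x : EuclideanSpace ℝ (Fin N) => (x k - z k)^2)
      ((2*(x k - z k)) • (EuclideanSpace.proj k : EuclideanSpace ℝ (Fin N) →L[ℝ] ℝ)) x := by
    intro k _
    have := (h k).fun_mul (h k)
    have heq : (fun y : EuclideanSpace ℝ (Fin N) => (y k - z k) * (y k - z k))
        = fun y => (y k - z k)^2 := by funext y; ring
    rw [heq] at this
    refine this.congr_fderiv ?_
    rw [two_mul, add_smul]
  exact HasFDerivAt.fun_sum h2

lemma qL_apply (x : EuclideanSpace ℝ (Fin N)) (j : Fin N) :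
    qL z x (EuclideanSpace.single j 1) = 2*(x j - z j) := by
  rw [qL]
  rw [ContinuousLinearMap.sum_apply]
  have : ∀ k : Fin N, ((2*(x k - z k)) •
      (EuclideanSpace.proj k : EuclideanSpace ℝ (Fin N) →L[ℝ] ℝ))
      (EuclideanSpace.single j 1) = if k = j then 2*(x k - z k) else 0 := by
    intro k
    have : (EuclideanSpace.proj k : EuclideanSpace ℝ (Fin N) →L[ℝ] ℝ)
        (EuclideanSpace.single j 1) = if k = j then 1 else 0 := by
      show EuclideanSpace.single j (1:ℝ) k = _
      rw [EuclideanSpace.single_apply]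
    rw [ContinuousLinearMap.smul_apply, this]
    simp only [smul_eq_mul, mul_ite, mul_one, mul_zero]
  rw [Finset.sum_congr rfl (fun k _ => this k)]
  simp

noncomputable def vb (x : EuclideanSpace ℝ (Fin N)) : ℝ := Real.exp (-α * qf z x)

lemma vb_pos (x : EuclideanSpace ℝ (Fin N)) : 0 < vb z α x := Real.exp_pos _

lemma hasFDerivAt_vb (x : EuclideanSpace ℝ (Fin N)) :
    HasFDerivAt (vb z α) ((-α * vb z α x) • qL z x) x := by
  have h1 : HasFDerivAt (fun x => -α * qf z x) ((-α) • qL z x) x :=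
    (hasFDerivAt_qf z x).const_mul (-α)
  have h2 := (Real.hasDerivAt_exp (-α * qf z x)).comp_hasFDerivAt x h1
  refine h2.congr_fderiv ?_
  rw [smul_smul, mul_comm]
  rfl

lemma vb_differentiable : Differentiable ℝ (vb z α) :=
  fun x => (hasFDerivAt_vb z α x).differentiableAt

lemma pd_vb (j : Fin N) (x : EuclideanSpace ℝ (Fin N)) :
    pd (vb z α) j x = -2*α*(x j - z j) * vb z α x := by
  rw [pd, (hasFDerivAt_vb z α x).fderiv]
  rw [ContinuousLinearMap.smul_apply, qL_apply]
  simp; ring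

lemma pd2_vb (i j : Fin N) (x : EuclideanSpace ℝ (Fin N)) :
    pd2 (vb z α) i j x
      = (4*α^2*(x i - z i)*(x j - z j) - 2*α*(if i = j then 1 else 0)) * vb z α x := by
  have heq : (fun x => pd (vb z α) j x)
      = fun x => (-2*α*(x j - z j)) * vb z α x := by
    funext x; rw [pd_vb]
  rw [pd2, heq]
  have hsub : HasFDerivAt (fun x : EuclideanSpace ℝ (Fin N) => x j - z j)
      (EuclideanSpace.proj j : EuclideanSpace ℝ (Fin N) →L[ℝ] ℝ) x :=
    ((EuclideanSpace.proj j : EuclideanSpace ℝ (Fin N) →L[ℝ] ℝ).hasFDerivAt).sub_const (z j)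
  have h1 : HasFDerivAt (fun x : EuclideanSpace ℝ (Fin N) => -2*α*(x j - z j))
      ((-2*α) • (EuclideanSpace.proj j : EuclideanSpace ℝ (Fin N) →L[ℝ] ℝ)) x :=
    hsub.const_mul (-2*α)
  have h2 := h1.fun_mul (hasFDerivAt_vb z α x)
  rw [h2.fderiv]
  have hproj : (EuclideanSpace.proj j : EuclideanSpace ℝ (Fin N) →L[ℝ] ℝ)
      (EuclideanSpace.single i 1) = if i = j then 1 else 0 := by
    show EuclideanSpace.single i (1:ℝ) j = _
    rw [EuclideanSpace.single_apply]
    simp [eq_comm]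
  simp only [ContinuousLinearMap.add_apply, ContinuousLinearMap.smul_apply, qL_apply, hproj,
    smul_eq_mul]
  by_cases hij : i = j <;> simp [hij] <;> ring

end Barrier

lemma pd_add_smul {N : ℕ} {Ω : Set (EuclideanSpace ℝ (Fin N))} (hΩo : IsOpen Ω)
    {u vf : EuclideanSpace ℝ (Fin N) → ℝ} (hu : ContDiffOn ℝ 2 u Ω)
    (hv : ContDiff ℝ 2 vf) (c Cc : ℝ) {x : EuclideanSpace ℝ (Fin N)} (hx : x ∈ Ω) :
    ∀ j, pd (fun t => u t + c * (vf t - Cc)) j x = pd u j x + c * pd vf j x := by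
  intro j
  have hud : DifferentiableAt ℝ u x := diffAt_of_contDiffOn hΩo hu hx
  have hvd : DifferentiableAt ℝ vf x := (hv.differentiable (by norm_num)).differentiableAt
  have hgd : DifferentiableAt ℝ (fun t => c * (vf t - Cc)) x :=
    ((hvd.sub_const Cc).const_mul c)
  rw [pd, fderiv_fun_add hud hgd]
  have h2 : fderiv ℝ (fun t => c * (vf t - Cc)) x = c • fderiv ℝ vf x := by
    rw [fderiv_const_mul (hvd.sub_const Cc) c]
    congr 1
    exact fderiv_sub_const Cc
  rw [h2]
  simp [pd]

lemma pd2_add_smul {N : ℕ} {Ω : Set (EuclideanSpace ℝ (Fin N))} (hΩo : IsOpen Ω)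
    {u vf : EuclideanSpace ℝ (Fin N) → ℝ} (hu : ContDiffOn ℝ 2 u Ω)
    (hv : ContDiff ℝ 2 vf) (c Cc : ℝ) {x : EuclideanSpace ℝ (Fin N)} (hx : x ∈ Ω) :
    ∀ i j, pd2 (fun t => u t + c * (vf t - Cc)) i j x
      = pd2 u i j x + c * pd2 vf i j x := by
  intro i j
  have hvglob : ContDiffOn ℝ 2 vf (Set.univ : Set (EuclideanSpace ℝ (Fin N))) :=
    hv.contDiffOn
  have hpdu : DifferentiableAt ℝ (fun t => pd u j t) x :=
    ((pd_differentiableOn hΩo hu j) x hx).differentiableAt (hΩo.mem_nhds hx)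
  have hpdv : DifferentiableAt ℝ (fun t => pd vf j t) x :=
    ((pd_differentiableOn isOpen_univ hvglob j) x (Set.mem_univ x)).differentiableAt
      (isOpen_univ.mem_nhds (Set.mem_univ x))
  have heq : (fun t => pd (fun t => u t + c * (vf t - Cc)) j t)
      =ᶠ[nhds x] (fun t => pd u j t + c * pd vf j t) := by
    filter_upwards [hΩo.mem_nhds hx] with t ht
    exact pd_add_smul hΩo hu hv c Cc ht j
  rw [pd2, heq.fderiv_eq, fderiv_fun_add hpdu (hpdv.const_mul c)]
  have h2 : fderiv ℝ (fun t => c * pd vf j t) x = c • fderiv ℝ (fun t => pd vf j t) x :=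
    fderiv_const_mul hpdv c
  rw [h2]
  simp [pd2]

lemma Lvb_eq {N : ℕ} (a : EuclideanSpace ℝ (Fin N) → Matrix (Fin N) (Fin N) ℝ)
    (b : EuclideanSpace ℝ (Fin N) → Fin N → ℝ)
    (z : EuclideanSpace ℝ (Fin N)) (α : ℝ) (x : EuclideanSpace ℝ (Fin N)) :
    (∑ i, ∑ j, a x i j * pd2 (vb z α) i j x) + ∑ j, b x j * pd (vb z α) j x
      = vb z α x * (4*α^2 * (∑ i, ∑ j, a x i j * (x i - z i) * (x j - z j))
        - 2*α*((∑ i, a x i i) + ∑ j, b x j * (x j - z j))) := by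
  set v := vb z α x with hv
  have h1 : ∀ i, ∑ j, a x i j * pd2 (vb z α) i j x
      = (∑ j, (4*α^2*v) * (a x i j * (x i - z i) * (x j - z j))) - (2*α*v) * a x i i := by
    intro i
    have hterm : ∀ j, a x i j * pd2 (vb z α) i j x
        = (4*α^2*v) * (a x i j * (x i - z i) * (x j - z j))
          - (2*α*v) * (if i = j then a x i j else 0) := by
      intro j
      rw [pd2_vb]
      by_cases h : i = j <;> simp [h] <;> ring
    rw [Finset.sum_congr rfl (fun j _ => hterm j), Finset.sum_sub_distrib]
    congr 1
    rw [← Finset.mul_sum, Finset.sum_ite_eq]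
    simp
  have h2 : ∑ j, b x j * pd (vb z α) j x
      = -((2*α*v) * ∑ j, b x j * (x j - z j)) := by
    have hterm : ∀ j, b x j * pd (vb z α) j x
        = -((2*α*v) * (b x j * (x j - z j))) := by
      intro j; rw [pd_vb]; ring
    rw [Finset.sum_congr rfl (fun j _ => hterm j), Finset.sum_neg_distrib, ← Finset.mul_sum]
  rw [Finset.sum_congr rfl (fun i _ => h1 i), Finset.sum_sub_distrib, h2]
  have h3 : ∑ i, ∑ j, (4*α^2*v) * (a x i j * (x i - z i) * (x j - z j))
      = (4*α^2*v) * ∑ i, ∑ j, a x i j * (x i - z i) * (x j - z j) := by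
    rw [Finset.mul_sum]
    exact Finset.sum_congr rfl (fun i _ => (Finset.mul_sum _ _ _).symm)
  rw [h3, ← Finset.mul_sum]
  ring

set_option maxHeartbeats 2000000 in

/-- Hopf-type Lemma: if `u ∈ C²(Ω)` satisfies `Lu ≥ 0` on the connected open
set `Ω`, where `L = ∑ a_{ij}(x)∂_i∂_j + ∑ b_j(x)∂_j` has continuous coefficients
with `A(x)` symmetric PSD everywhere, and the maximum set `F(u)` is a nonempty
proper subset of `Ω`, then `⟨A(y)ν, ν⟩ = 0` whenever `ν ⊥ F(u)` at `y`. -/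
theorem stmt7 {N : ℕ}
    (a : EuclideanSpace ℝ (Fin N) → Matrix (Fin N) (Fin N) ℝ)
    (b : EuclideanSpace ℝ (Fin N) → Fin N → ℝ)
    (ha_cont : ∀ i j, Continuous fun x => a x i j)
    (hb_cont : ∀ j, Continuous fun x => b x j)
    (hPSD : ∀ x, (a x).PosSemidef)
    (Ω : Set (EuclideanSpace ℝ (Fin N))) (hΩo : IsOpen Ω) (hΩc : IsConnected Ω)
    (u : EuclideanSpace ℝ (Fin N) → ℝ) (hu : ContDiffOn ℝ 2 u Ω)
    (hsub : ∀ x ∈ Ω, 0 ≤ (∑ i, ∑ j, a x i j * pd2 u i j x) + ∑ j, b x j * pd u j x)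
    (m : ℝ) (hm : ∀ x ∈ Ω, u x ≤ m)
    (F : Set (EuclideanSpace ℝ (Fin N))) (hF : F = {x ∈ Ω | u x = m})
    (hFne : F.Nonempty) (hFprop : F ≠ Ω) :
    ∀ y ∈ Ω ∩ frontier F, ∀ ν : EuclideanSpace ℝ (Fin N), ν ≠ 0 →
      Metric.closedBall (y + ν) ‖ν‖ ⊆ Ω →
      Metric.closedBall (y + ν) ‖ν‖ ∩ F = {y} →
      ((a y).mulVec (fun j => ν j) ⬝ᵥ fun j => ν j) = 0 := by
  intro y hy ν hν hball hsingle
  set z : EuclideanSpace ℝ (Fin N) := y + ν with hz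
  set r : ℝ := ‖ν‖ with hrdef
  have hr : 0 < r := norm_pos_iff.2 hν
  -- y belongs to F
  have hyF : y ∈ F := by
    have : y ∈ Metric.closedBall z r ∩ F := hsingle ▸ rfl
    exact this.2
  have hyΩ : y ∈ Ω := hy.1
  have huy : u y = m := by rw [hF] at hyF; exact hyF.2
  have hyz : dist y z = r := by rw [hz, dist_self_add_right]
  have hzyj : ∀ j, y j - z j = -(ν j) := by intro j; show y j - (y j + ν j) = _; ring
  -- the quadratic quantity
  set κ : ℝ := ((a y).mulVec (fun j => ν j) ⬝ᵥ fun j => ν j) with hκdef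
  have hκnn : 0 ≤ κ := by
    have := (hPSD y).dotProduct_mulVec_nonneg (fun j => ν j)
    rw [star_trivial, dotProduct_comm] at this
    exact this
  by_contra hne
  have hκ : 0 < κ := lt_of_le_of_ne hκnn (Ne.symm hne)
  -- κ as a double sum
  have hκsum : κ = ∑ i, ∑ j, a y i j * (y i - z i) * (y j - z j) := by
    rw [hκdef]
    simp only [dotProduct, Matrix.mulVec, hzyj]
    apply Finset.sum_congr rfl; intro i _
    rw [Finset.sum_mul]
    apply Finset.sum_congr rfl; intro j _
    ring
  -- the coefficient functions
  set Φ : EuclideanSpace ℝ (Fin N) → ℝ :=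
    fun x => ∑ i, ∑ j, a x i j * (x i - z i) * (x j - z j) with hΦdef
  set T : EuclideanSpace ℝ (Fin N) → ℝ :=
    fun x => (∑ i, a x i i) + ∑ j, b x j * (x j - z j) with hTdef
  have hcoord : ∀ k : Fin N, Continuous fun x : EuclideanSpace ℝ (Fin N) => x k :=
    fun k => (EuclideanSpace.proj (𝕜 := ℝ) k).continuous
  have hΦcont : Continuous Φ := by
    apply continuous_finset_sum; intro i _
    apply continuous_finset_sum; intro j _
    exact ((ha_cont i j).mul ((hcoord i).sub continuous_const)).mul
      ((hcoord j).sub continuous_const)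
  have hTcont : Continuous T := by
    apply Continuous.add
    · exact continuous_finset_sum _ (fun i _ => ha_cont i i)
    · exact continuous_finset_sum _
        (fun j _ => (hb_cont j).mul ((hcoord j).sub continuous_const))
  have hΦy : Φ y = κ := by rw [hκsum]
  -- choose δ with Φ > κ/2 on ball y δ
  have hopen : IsOpen {x | κ/2 < Φ x} := isOpen_lt continuous_const hΦcont
  have hymem : y ∈ {x | κ/2 < Φ x} := by simp only [Set.mem_setOf_eq, hΦy]; linarith
  obtain ⟨δ₀, hδ₀, hδball⟩ := Metric.isOpen_iff.1 hopen y hymem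
  set δ : ℝ := min (δ₀/2) (r/2) with hδdef
  have hδpos : 0 < δ := lt_min (by linarith) (by linarith)
  have hδr : δ < r := lt_of_le_of_lt (min_le_right _ _) (by linarith)
  have hΦδ : ∀ x, dist x y ≤ δ → κ/2 < Φ x := by
    intro x hx
    apply hδball
    rw [Metric.mem_ball]
    have h1 : δ ≤ δ₀/2 := min_le_left _ _
    linarith
  -- bound for T on closedBall y r
  have hTbound : ∃ M : ℝ, 0 ≤ M ∧ ∀ x ∈ Metric.closedBall y r, T x ≤ M := by
    obtain ⟨xs, _, hxs⟩ := (isCompact_closedBall y r).exists_isMaxOn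
      ⟨y, Metric.mem_closedBall_self (le_of_lt hr)⟩ hTcont.continuousOn
    exact ⟨max (T xs) 0, le_max_right _ _,
      fun x hx => le_trans (hxs hx) (le_max_left _ _)⟩
  obtain ⟨M, hM0, hM⟩ := hTbound
  set α : ℝ := (M+1)/κ with hαdef
  have hα : 0 < α := div_pos (by linarith) hκ
  have hακ : α * κ = M + 1 := div_mul_cancel₀ _ (ne_of_gt hκ)
  -- geometry: distances along the segment
  have hdistz : ∀ t : ℝ, dist (y + t • ν) z = |t - 1| * r := by
    intro t
    rw [dist_eq_norm]
    have h : y + t • ν - z = (t - 1) • ν := by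
      rw [hz, sub_smul, one_smul]
      abel
    rw [h, norm_smul, Real.norm_eq_abs, hrdef]
  have hdisty : ∀ t : ℝ, dist (y + t • ν) y = |t| * r := by
    intro t
    rw [dist_eq_norm]
    have h : y + t • ν - y = t • ν := by abel
    rw [h, norm_smul, Real.norm_eq_abs, hrdef]
  -- qf equals squared distance
  have hqd : ∀ x : EuclideanSpace ℝ (Fin N), qf z x = dist x z ^ 2 := by
    intro x
    rw [EuclideanSpace.dist_eq, Real.sq_sqrt (Finset.sum_nonneg fun i _ => sq_nonneg _)]
    apply Finset.sum_congr rfl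
    intro k _
    rw [Real.dist_eq, sq_abs]
  set C : ℝ := Real.exp (-α * r^2) with hCdef
  have hvbsphere : ∀ x : EuclideanSpace ℝ (Fin N), dist x z = r → vb z α x = C := by
    intro x hx
    rw [vb, hqd, hx]
  have hvble : ∀ x : EuclideanSpace ℝ (Fin N), vb z α x ≤ 1 := by
    intro x
    rw [vb]
    apply Real.exp_le_one_iff.2
    have : 0 ≤ qf z x := Finset.sum_nonneg fun i _ => sq_nonneg _
    nlinarith
  -- ε on the inner sphere part of the boundary
  have hΓ : ∃ ε > 0, ∀ x ∈ Metric.closedBall z r ∩ Metric.sphere y δ, u x ≤ m - ε := by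
    set K2 := Metric.closedBall z r ∩ Metric.sphere y δ with hK2def
    by_cases hK2 : K2.Nonempty
    · have hK2comp : IsCompact K2 :=
        (isCompact_closedBall z r).inter_right (Metric.isClosed_sphere)
      have hK2Ω : K2 ⊆ Ω := fun x hx => hball hx.1
      obtain ⟨xm, hxmK, hxmmax⟩ := hK2comp.exists_isMaxOn hK2
        ((hu.continuousOn).mono hK2Ω)
      have hxmlt : u xm < m := by
        rcases lt_or_eq_of_le (hm xm (hK2Ω hxmK)) with h | h
        · exact h
        · exfalso
          have hxmF : xm ∈ F := by rw [hF]; exact ⟨hK2Ω hxmK, h⟩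
          have : xm ∈ Metric.closedBall z r ∩ F := ⟨hxmK.1, hxmF⟩
          rw [hsingle] at this
          have hxy : xm = y := this
          have := hxmK.2
          rw [hxy] at this
          simp [Metric.mem_sphere] at this
          linarith
      exact ⟨m - u xm, by linarith, fun x hx => by
        have := hxmmax hx
        simp only [Set.mem_setOf_eq] at this
        linarith⟩
    · exact ⟨1, one_pos, fun x hx => absurd ⟨x, hx⟩ hK2⟩
  obtain ⟨ε, hεpos, hε⟩ := hΓ
  -- the comparison function w
  have hqfC2 : ContDiff ℝ 2 (qf z) := by
    apply ContDiff.sum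
    intro k _
    exact (((EuclideanSpace.proj k : EuclideanSpace ℝ (Fin N) →L[ℝ] ℝ).contDiff).sub
      contDiff_const).pow 2
  have hvbC2 : ContDiff ℝ 2 (vb z α) :=
    Real.contDiff_exp.comp (contDiff_const.mul hqfC2)
  set w : EuclideanSpace ℝ (Fin N) → ℝ :=
    fun t => u t + (ε/2) * (vb z α t - C) with hwdef
  have hwC2 : ContDiffOn ℝ 2 w Ω :=
    hu.add ((contDiff_const.mul (hvbC2.sub contDiff_const)).contDiffOn)
  -- the domain D
  set D : Set (EuclideanSpace ℝ (Fin N)) := Metric.ball z r ∩ Metric.ball y δ with hDdef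
  have hDo : IsOpen D := Metric.isOpen_ball.inter Metric.isOpen_ball
  have hDb : Bornology.IsBounded D :=
    (Metric.isBounded_ball).subset Set.inter_subset_left
  have hDcl : closure D ⊆ Metric.closedBall z r ∩ Metric.closedBall y δ := by
    intro x hx
    constructor
    · exact Metric.closure_ball_subset_closedBall
        ((closure_mono Set.inter_subset_left) hx)
    · exact Metric.closure_ball_subset_closedBall
        ((closure_mono Set.inter_subset_right) hx)
  have hDΩ : closure D ⊆ Ω := fun x hx => hball (hDcl hx).1
  have hDne : D.Nonempty := by
    set t0 : ℝ := min (1/2) (δ/(2*r)) with ht0def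
    have ht0pos : 0 < t0 := lt_min (by norm_num) (div_pos hδpos (by linarith))
    have ht0half : t0 ≤ 1/2 := min_le_left _ _
    refine ⟨y + t0 • ν, ?_, ?_⟩
    · rw [Metric.mem_ball, hdistz]
      have : |t0 - 1| = 1 - t0 := by rw [abs_of_nonpos (by linarith)]; ring
      rw [this]
      nlinarith
    · rw [Metric.mem_ball, hdisty, abs_of_pos ht0pos]
      have h2 : t0 ≤ δ/(2*r) := min_le_right _ _
      have : t0 * r ≤ (δ/(2*r)) * r := by nlinarith
      have hr' : (δ/(2*r)) * r = δ/2 := by field_simp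
      linarith [hr' ▸ this]
  -- strict subsolution property of w on D
  have hstrict : ∀ x ∈ D,
      0 < (∑ i, ∑ j, a x i j * pd2 w i j x) + ∑ j, b x j * pd w j x := by
    intro x hx
    have hxΩ : x ∈ Ω := hball (Metric.ball_subset_closedBall hx.1)
    have hpdw : ∀ j, pd w j x = pd u j x + (ε/2) * pd (vb z α) j x :=
      pd_add_smul hΩo hu hvbC2 (ε/2) C hxΩ
    have hpd2w : ∀ i j, pd2 w i j x = pd2 u i j x + (ε/2) * pd2 (vb z α) i j x :=
      pd2_add_smul hΩo hu hvbC2 (ε/2) C hxΩ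
    have hsplit : (∑ i, ∑ j, a x i j * pd2 w i j x) + ∑ j, b x j * pd w j x
        = ((∑ i, ∑ j, a x i j * pd2 u i j x) + ∑ j, b x j * pd u j x)
          + (ε/2) * ((∑ i, ∑ j, a x i j * pd2 (vb z α) i j x)
            + ∑ j, b x j * pd (vb z α) j x) := by
      have e1 : ∑ i, ∑ j, a x i j * pd2 w i j x
          = (∑ i, ∑ j, a x i j * pd2 u i j x)
            + (ε/2) * ∑ i, ∑ j, a x i j * pd2 (vb z α) i j x := by
        rw [Finset.mul_sum, ← Finset.sum_add_distrib]
        apply Finset.sum_congr rfl; intro i _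
        rw [Finset.mul_sum, ← Finset.sum_add_distrib]
        apply Finset.sum_congr rfl; intro j _
        rw [hpd2w i j]; ring
      have e2 : ∑ j, b x j * pd w j x
          = (∑ j, b x j * pd u j x) + (ε/2) * ∑ j, b x j * pd (vb z α) j x := by
        rw [Finset.mul_sum, ← Finset.sum_add_distrib]
        apply Finset.sum_congr rfl; intro j _
        rw [hpdw j]; ring
      rw [e1, e2]; ring
    rw [hsplit]
    have hLu := hsub x hxΩ
    have hLv : 0 < (∑ i, ∑ j, a x i j * pd2 (vb z α) i j x)
        + ∑ j, b x j * pd (vb z α) j x := by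
      rw [Lvb_eq]
      have hΦx : κ/2 < Φ x := hΦδ x (le_of_lt hx.2)
      have hTx : T x ≤ M := hM x (Metric.closedBall_subset_closedBall (le_of_lt hδr)
        (Metric.ball_subset_closedBall hx.2))
      have hvbpos := vb_pos z α x
      have hΦeq : (∑ i, ∑ j, a x i j * (x i - z i) * (x j - z j)) = Φ x := by
        rw [hΦdef]
      have hTeq : ((∑ i, a x i i) + ∑ j, b x j * (x j - z j)) = T x := by
        rw [hTdef]
      rw [hΦeq, hTeq]
      have hA2 : (0:ℝ) < 4*α^2 := by positivity
      have h5 : 4*α^2*(κ/2) < 4*α^2*Φ x := mul_lt_mul_of_pos_left hΦx hA2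
      have h6 : 4*α^2*(κ/2) = 2*α*(M+1) := by rw [← hακ]; ring
      have h7 : 2*α*T x ≤ 2*α*M := mul_le_mul_of_nonneg_left hTx (by positivity)
      have key : 0 < 4*α^2 * Φ x - 2*α * T x := by linarith
      exact mul_pos hvbpos key
    have hfin := mul_pos (half_pos hεpos) hLv
    linarith
  -- maximum principle
  obtain ⟨x0, hx0bd, hx0max⟩ := exists_boundary_max a b hPSD hΩo hwC2 D hDo hDb hDne hDΩ hstrict
  -- w ≤ m on the boundary max point
  have hx0m : w x0 ≤ m := by
    have hx0cl := hx0bd.1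
    have hx0mem := hDcl hx0cl
    have hcases : dist x0 z = r ∨ dist x0 y = δ := by
      by_contra hcon
      push_neg at hcon
      apply hx0bd.2
      exact ⟨Metric.mem_ball.2 (lt_of_le_of_ne (Metric.mem_closedBall.1 hx0mem.1) hcon.1),
        Metric.mem_ball.2 (lt_of_le_of_ne (Metric.mem_closedBall.1 hx0mem.2) hcon.2)⟩
    have hx0Ω : x0 ∈ Ω := hDΩ hx0cl
    rcases hcases with h | h
    · have hveq : vb z α x0 = C := hvbsphere x0 h
      show u x0 + (ε/2) * (vb z α x0 - C) ≤ m
      rw [hveq, sub_self, mul_zero, add_zero]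
      exact hm x0 hx0Ω
    · have hx0K2 : x0 ∈ Metric.closedBall z r ∩ Metric.sphere y δ := ⟨hx0mem.1, h⟩
      have h1 : u x0 ≤ m - ε := hε x0 hx0K2
      have h2 : vb z α x0 - C ≤ 1 := by
        have := hvble x0
        have : (0:ℝ) < C := Real.exp_pos _
        linarith [hvble x0]
      have h3 : (ε/2) * (vb z α x0 - C) ≤ (ε/2) * 1 :=
        mul_le_mul_of_nonneg_left h2 (by linarith)
      show u x0 + (ε/2) * (vb z α x0 - C) ≤ m
      linarith
  have hwm : ∀ x ∈ closure D, w x ≤ m := fun x hx => le_trans (hx0max x hx) hx0m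
  -- derivative of w along ν at y is positive
  have hpdu0 : ∀ j, pd u j y = 0 := by
    have hlm : IsLocalMax u y := by
      filter_upwards [hΩo.mem_nhds hyΩ] with t ht
      rw [huy]; exact hm t ht
    intro j
    simp [pd, hlm.fderiv_eq_zero]
  have hvby : vb z α y = C := hvbsphere y hyz
  have hsum2 : 0 < ∑ j, (ν j)^2 := by
    have hj : ∃ j, ν j ≠ 0 := by
      by_contra hcon
      push_neg at hcon
      apply hν
      ext j
      exact hcon j
    obtain ⟨j0, hj0⟩ := hj
    exact Finset.sum_pos' (fun j _ => sq_nonneg _)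
      ⟨j0, Finset.mem_univ j0, by positivity⟩
  set c : ℝ := (ε * α * C) * ∑ j, (ν j)^2 with hcdef
  have hcpos : 0 < c := by
    have : (0:ℝ) < C := Real.exp_pos _
    positivity
  have hgd : HasDerivAt (fun t : ℝ => w (y + t • ν)) c 0 := by
    have h0 : y + (0:ℝ) • ν = y := by simp
    have hwdy : DifferentiableAt ℝ w y := diffAt_of_contDiffOn hΩo hwC2 hyΩ
    have := hasDerivAt_line w y ν 0 (by rw [h0]; exact hwdy)
    rw [h0] at this
    have heq : (∑ j, ν j * pd w j y) = c := by
      have hpdw : ∀ j, pd w j y = pd u j y + (ε/2) * pd (vb z α) j y :=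
        pd_add_smul hΩo hu hvbC2 (ε/2) C hyΩ
      have hterm : ∀ j, ν j * pd w j y = (ε * α * C) * (ν j)^2 := by
        intro j
        rw [hpdw j, hpdu0 j, pd_vb, hzyj j, hvby]
        ring
      rw [Finset.sum_congr rfl (fun j _ => hterm j), ← Finset.mul_sum]
    rwa [heq] at this
  have hg0 : w (y + (0:ℝ) • ν) = m := by
    have h0 : y + (0:ℝ) • ν = y := by simp
    rw [h0]
    show u y + (ε/2) * (vb z α y - C) = m
    rw [hvby, sub_self, mul_zero, add_zero]
    exact huy
  -- get a contradiction
  have hev := eventually_gt_of_hasDerivAt_pos hgd hcpos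
  set tmax : ℝ := min 1 (δ/r) with htmaxdef
  have htmaxpos : 0 < tmax := lt_min one_pos (div_pos hδpos hr)
  have hIoo : Set.Ioo (0:ℝ) tmax ∈ nhdsWithin (0:ℝ) (Set.Ioi 0) :=
    Ioo_mem_nhdsGT_of_mem ⟨le_refl 0, htmaxpos⟩
  obtain ⟨t, hgt, htIoo⟩ := (hev.and (Filter.eventually_of_mem hIoo (fun t ht => ht))).exists
  have htD : y + t • ν ∈ D := by
    have ht1 : t < 1 := lt_of_lt_of_le htIoo.2 (min_le_left _ _)
    have ht2 : t < δ/r := lt_of_lt_of_le htIoo.2 (min_le_right _ _)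
    have ht0 : 0 < t := htIoo.1
    constructor
    · rw [Metric.mem_ball, hdistz]
      have : |t - 1| = 1 - t := by rw [abs_of_nonpos (by linarith)]; ring
      rw [this]; nlinarith
    · rw [Metric.mem_ball, hdisty, abs_of_pos ht0]
      calc t * r < (δ/r) * r := by nlinarith
        _ = δ := by field_simp
  have hle := hwm (y + t • ν) (subset_closure htD)
  rw [hg0] at hgt
  linarith
end

section
/- Hopf-type Lemma with zero-order term: Under the same structural assumptions on L as in the Hopf Lemma, let c : R^N → R be continuous and nonnegative, set L_c := L - c. Let u ∈ C²(Ω) satisfy L_c u ≥ 0 on Ω, suppose F(u) = {x ∈ Ω : u(x) = max_Ω u} is a nonempty proper subset of Ω, and suppose max_Ω u ≥ 0. Then ⟨A(y)ν, ν⟩ = 0 whenever ν is externally orthogonal to F(u) at y. -/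
open Matrix

open Set Filter Topology

/-- If `φ` has a derivative `φ' t` on `[-t0,t0]`, `φ'` has derivative `q` at `0`,
and `0` is a maximum point of `φ` on `[-t0,t0]`, then `q ≤ 0`. -/
lemma secondDeriv_nonpos_at_max {φ φ' : ℝ → ℝ} {q t0 : ℝ} (ht0 : 0 < t0)
    (hd : ∀ t ∈ Set.Icc (-t0) t0, HasDerivAt φ (φ' t) t)
    (hd2 : HasDerivAt φ' q 0)
    (hmax : ∀ t ∈ Set.Icc (-t0) t0, φ t ≤ φ 0) : q ≤ 0 := by
  have h0mem : (0:ℝ) ∈ Set.Icc (-t0) t0 := ⟨by linarith, ht0.le⟩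
  have hloc : IsLocalMax φ 0 := by
    filter_upwards [Icc_mem_nhds (by linarith : -t0 < (0:ℝ)) ht0] with t ht using hmax t ht
  have hφ'0 : φ' 0 = 0 := hloc.hasDerivAt_eq_zero (hd 0 h0mem)
  -- for each n, find s n ∈ (0, t0/(n+1)) with φ' (s n) ≤ 0 by the MVT
  have key : ∀ n : ℕ, ∃ s : ℝ, s ∈ Set.Ioo 0 (t0 / (n+1)) ∧ φ' s ≤ 0 := by
    intro n
    have hpos : 0 < t0 / (n+1) := by positivity
    have hsub : Set.Icc (0:ℝ) (t0/(n+1)) ⊆ Set.Icc (-t0) t0 := by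
      apply Set.Icc_subset_Icc (by linarith)
      rw [div_le_iff₀ (by positivity)]
      nlinarith [Nat.cast_nonneg (α := ℝ) n]
    have hcont : ContinuousOn φ (Set.Icc 0 (t0/(n+1))) :=
      fun x hx => ((hd x (hsub hx)).continuousAt).continuousWithinAt
    have hder : ∀ x ∈ Set.Ioo (0:ℝ) (t0/(n+1)), HasDerivAt φ (φ' x) x :=
      fun x hx => hd x (hsub (Set.mem_Icc_of_Ioo hx))
    obtain ⟨s, hs, hseq⟩ := exists_hasDerivAt_eq_slope φ φ' hpos hcont hder
    refine ⟨s, hs, ?_⟩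
    rw [hseq]
    have h1 : φ (t0/(n+1)) ≤ φ 0 := hmax _ (hsub (Set.right_mem_Icc.2 hpos.le))
    apply div_nonpos_of_nonpos_of_nonneg <;> linarith
  choose s hs hsle using key
  have hs0 : ∀ n, 0 < s n := fun n => (hs n).1
  have hslt : ∀ n : ℕ, s n < t0 / (n+1) := fun n => (hs n).2
  have hstend : Tendsto s atTop (𝓝 0) := by
    have h2 : Tendsto (fun n : ℕ => t0 / (n+1)) atTop (𝓝 0) := by
      have := tendsto_natCast_atTop_atTop (R := ℝ)
      exact Tendsto.div_atTop tendsto_const_nhds (by exact tendsto_atTop_add_const_right _ 1 this)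
    exact squeeze_zero (fun n => (hs0 n).le) (fun n => (hslt n).le) h2
  have hstend' : Tendsto s atTop (𝓝[≠] (0:ℝ)) := by
    apply tendsto_nhdsWithin_of_tendsto_nhds_of_eventually_within _ hstend
    exact Eventually.of_forall fun n => (hs0 n).ne'
  have hslope := (hasDerivAt_iff_tendsto_slope.1 hd2).comp hstend'
  refine le_of_tendsto hslope (Eventually.of_forall fun n => ?_)
  have : slope φ' 0 (s n) = φ' (s n) / (s n) := by
    simp [slope, hφ'0, inv_mul_eq_div]
  rw [Function.comp_apply, this]
  exact div_nonpos_of_nonpos_of_nonneg (hsle n) (hs0 n).le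

/-- If `φ` has derivative `d` at `0` and `φ t ≤ φ 0` for `t ∈ (0,t0]`, then `d ≤ 0`. -/
lemma rightDeriv_nonpos {φ : ℝ → ℝ} {d t0 : ℝ} (ht0 : 0 < t0)
    (hd : HasDerivAt φ d 0) (hle : ∀ t ∈ Set.Ioc 0 t0, φ t ≤ φ 0) : d ≤ 0 := by
  have h1 : Tendsto (slope φ 0) (𝓝[>] (0:ℝ)) (𝓝 d) :=
    (hasDerivAt_iff_tendsto_slope.1 hd).mono_left (nhdsWithin_mono _ fun x hx => ne_of_gt hx)
  refine le_of_tendsto h1 ?_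
  filter_upwards [Ioc_mem_nhdsGT_of_mem (Set.left_mem_Ico.2 ht0)] with t ht
  have : slope φ 0 t = (φ t - φ 0) / t := by simp [slope, inv_mul_eq_div]
  rw [this]
  exact div_nonpos_of_nonpos_of_nonneg (by linarith [hle t ht]) ht.1.le



/-- trace of PSD times NSD-quadratic-form matrix is nonpositive -/
lemma psd_trace_nonpos {N : ℕ} {A : Matrix (Fin N) (Fin N) ℝ} (hA : A.PosSemidef)
    {H : Fin N → Fin N → ℝ}
    (hH : ∀ d : Fin N → ℝ, (∑ i, ∑ j, d i * d j * H i j) ≤ 0) :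
    (∑ i, ∑ j, A i j * H i j) ≤ 0 := by
  obtain ⟨S, hSS⟩ : ∃ B : Matrix (Fin N) (Fin N) ℝ, A = star B * B := by
    open scoped MatrixOrder in exact CStarAlgebra.nonneg_iff_eq_star_mul_self.mp hA.nonneg
  have hAij : ∀ i j, A i j = ∑ k, S k i * S k j := by
    intro i j
    rw [hSS, Matrix.mul_apply]
    simp
  calc (∑ i, ∑ j, A i j * H i j)
      = ∑ i, ∑ j, ∑ k, S k i * S k j * H i j := by
        simp_rw [hAij, Finset.sum_mul]
    _ = ∑ i, ∑ k, ∑ j, S k i * S k j * H i j :=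
        Finset.sum_congr rfl fun i _ => Finset.sum_comm
    _ = ∑ k, ∑ i, ∑ j, S k i * S k j * H i j := Finset.sum_comm
    _ ≤ 0 := Finset.sum_nonpos fun k _ => hH fun i => S k i

/-- decomposition of a continuous linear functional on Euclidean space -/
lemma clm_apply_eq_sum {N : ℕ} (L : EuclideanSpace ℝ (Fin N) →L[ℝ] ℝ)
    (d : EuclideanSpace ℝ (Fin N)) :
    L d = ∑ j, d j * L (EuclideanSpace.single j 1) := by
  have hx : d = ∑ j, d j • EuclideanSpace.single j 1 := by
    ext k
    have : (∑ j, d j • EuclideanSpace.single j 1 : EuclideanSpace ℝ (Fin N)) k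
        = ∑ j, d j * (if k = j then 1 else 0) := by
      rw [WithLp.ofLp_sum, Finset.sum_apply]
      exact Finset.sum_congr rfl fun j _ => by
        rw [PiLp.smul_apply, EuclideanSpace.single_apply, smul_eq_mul]
    rw [this]
    simp
  conv_lhs => rw [hx]
  rw [map_sum]
  simp [smul_eq_mul]




noncomputable def Gfun {N : ℕ} (x0 x : EuclideanSpace ℝ (Fin N)) : ℝ :=
  ∑ k, (x k - x0 k)^2

noncomputable def Gderiv {N : ℕ} (x0 x : EuclideanSpace ℝ (Fin N)) :
    EuclideanSpace ℝ (Fin N) →L[ℝ] ℝ :=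
  ∑ k, (2*(x k - x0 k)) • (EuclideanSpace.proj k : EuclideanSpace ℝ (Fin N) →L[ℝ] ℝ)

lemma hasFDerivAt_Gfun {N : ℕ} (x0 x : EuclideanSpace ℝ (Fin N)) :
    HasFDerivAt (Gfun x0) (Gderiv x0 x) x := by
  have h : ∀ k : Fin N, HasFDerivAt (fun x : EuclideanSpace ℝ (Fin N) => (x k - x0 k)^2)
      ((2*(x k - x0 k)) • (EuclideanSpace.proj k : EuclideanSpace ℝ (Fin N) →L[ℝ] ℝ)) x := by
    intro k
    have h1 : HasFDerivAt (fun x : EuclideanSpace ℝ (Fin N) => x k - x0 k)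
        (EuclideanSpace.proj k : EuclideanSpace ℝ (Fin N) →L[ℝ] ℝ) x := by
      have h0 : HasFDerivAt (fun x : EuclideanSpace ℝ (Fin N) => x k)
          (EuclideanSpace.proj k : EuclideanSpace ℝ (Fin N) →L[ℝ] ℝ) x :=
        (EuclideanSpace.proj k : EuclideanSpace ℝ (Fin N) →L[ℝ] ℝ).hasFDerivAt
      exact h0.sub_const (x0 k)
    have h2 := h1.mul h1
    have heq : (fun x : EuclideanSpace ℝ (Fin N) => (x k - x0 k)^2)
        = fun x => (x k - x0 k) * (x k - x0 k) := by
      funext z; ring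
    rw [heq]
    rw [two_mul, add_smul]
    exact h2
  exact HasFDerivAt.fun_sum fun k _ => h k

lemma Gderiv_apply {N : ℕ} (x0 x : EuclideanSpace ℝ (Fin N)) (d : EuclideanSpace ℝ (Fin N)) :
    Gderiv x0 x d = ∑ k, 2*(x k - x0 k) * d k := by
  rw [Gderiv, ContinuousLinearMap.sum_apply]
  exact Finset.sum_congr rfl fun k _ => by
    rw [ContinuousLinearMap.smul_apply]; simp [mul_assoc]

lemma Gderiv_single {N : ℕ} (x0 x : EuclideanSpace ℝ (Fin N)) (j : Fin N) :
    Gderiv x0 x (EuclideanSpace.single j 1) = 2*(x j - x0 j) := by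
  rw [Gderiv_apply]
  have : ∀ k : Fin N, 2*(x k - x0 k) * (EuclideanSpace.single j 1 : EuclideanSpace ℝ (Fin N)) k
      = if k = j then 2*(x k - x0 k) else 0 := by
    intro k; rw [EuclideanSpace.single_apply]; split <;> simp
  simp_rw [this]
  simp

noncomputable def wfun {N : ℕ} (x0 : EuclideanSpace ℝ (Fin N)) (α r : ℝ)
    (x : EuclideanSpace ℝ (Fin N)) : ℝ :=
  Real.exp (-α * Gfun x0 x) - Real.exp (-α * r^2)

lemma hasFDerivAt_wfun {N : ℕ} (x0 : EuclideanSpace ℝ (Fin N)) (α r : ℝ)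
    (x : EuclideanSpace ℝ (Fin N)) :
    HasFDerivAt (wfun x0 α r)
      ((-α * Real.exp (-α * Gfun x0 x)) • Gderiv x0 x) x := by
  have h1 := ((hasFDerivAt_Gfun x0 x).const_mul (-α)).exp
  have h2 := h1.sub_const (Real.exp (-α * r^2))
  have : (Real.exp (-α * Gfun x0 x)) • ((-α) • Gderiv x0 x)
      = (-α * Real.exp (-α * Gfun x0 x)) • Gderiv x0 x := by
    rw [smul_smul, mul_comm]
  rw [← this]
  exact h2

lemma pd_wfun {N : ℕ} (x0 : EuclideanSpace ℝ (Fin N)) (α r : ℝ) (j : Fin N)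
    (x : EuclideanSpace ℝ (Fin N)) :
    pd (wfun x0 α r) j x = -2*α*(x j - x0 j) * Real.exp (-α * Gfun x0 x) := by
  rw [pd, (hasFDerivAt_wfun x0 α r x).fderiv]
  rw [ContinuousLinearMap.smul_apply, Gderiv_single]
  simp [smul_eq_mul]; ring

lemma hasFDerivAt_pd_wfun {N : ℕ} (x0 : EuclideanSpace ℝ (Fin N)) (α r : ℝ) (j : Fin N)
    (x : EuclideanSpace ℝ (Fin N)) :
    HasFDerivAt (fun z => pd (wfun x0 α r) j z)
      (((-2*α*(x j - x0 j)) • ((-α * Real.exp (-α * Gfun x0 x)) • Gderiv x0 x))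
        + (Real.exp (-α * Gfun x0 x)) • ((-2*α) • (EuclideanSpace.proj j :
            EuclideanSpace ℝ (Fin N) →L[ℝ] ℝ))) x := by
  have heq : (fun z => pd (wfun x0 α r) j z)
      = fun z => (-2*α*(z j - x0 j)) * Real.exp (-α * Gfun x0 z) := by
    funext z; exact pd_wfun x0 α r j z
  rw [heq]
  have h0 : HasFDerivAt (fun z : EuclideanSpace ℝ (Fin N) => z j)
      (EuclideanSpace.proj j : EuclideanSpace ℝ (Fin N) →L[ℝ] ℝ) x :=
    (EuclideanSpace.proj j : EuclideanSpace ℝ (Fin N) →L[ℝ] ℝ).hasFDerivAt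
  have hc : HasFDerivAt (fun z : EuclideanSpace ℝ (Fin N) => -2*α*(z j - x0 j))
      ((-2*α) • (EuclideanSpace.proj j : EuclideanSpace ℝ (Fin N) →L[ℝ] ℝ)) x :=
    (h0.sub_const (x0 j)).const_mul (-2*α)
  have hd : HasFDerivAt (fun z => Real.exp (-α * Gfun x0 z))
      ((-α * Real.exp (-α * Gfun x0 x)) • Gderiv x0 x) x := by
    have h1 := ((hasFDerivAt_Gfun x0 x).const_mul (-α)).exp
    have h2 : (Real.exp (-α * Gfun x0 x)) • ((-α) • Gderiv x0 x)
        = (-α * Real.exp (-α * Gfun x0 x)) • Gderiv x0 x := by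
      rw [smul_smul, mul_comm]
    rw [← h2]; exact h1
  exact hc.mul hd

lemma differentiableAt_pd_wfun {N : ℕ} (x0 : EuclideanSpace ℝ (Fin N)) (α r : ℝ) (j : Fin N)
    (x : EuclideanSpace ℝ (Fin N)) :
    DifferentiableAt ℝ (fun z => pd (wfun x0 α r) j z) x :=
  (hasFDerivAt_pd_wfun x0 α r j x).differentiableAt

lemma pd2_wfun {N : ℕ} (x0 : EuclideanSpace ℝ (Fin N)) (α r : ℝ) (i j : Fin N)
    (x : EuclideanSpace ℝ (Fin N)) :
    pd2 (wfun x0 α r) i j x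
      = (4*α^2*(x i - x0 i)*(x j - x0 j) - (if i = j then 2*α else 0))
          * Real.exp (-α * Gfun x0 x) := by
  rw [pd2, (hasFDerivAt_pd_wfun x0 α r j x).fderiv]
  rw [ContinuousLinearMap.add_apply, ContinuousLinearMap.smul_apply,
    ContinuousLinearMap.smul_apply, ContinuousLinearMap.smul_apply, Gderiv_single]
  have hproj : (EuclideanSpace.proj j : EuclideanSpace ℝ (Fin N) →L[ℝ] ℝ)
      (EuclideanSpace.single i 1) = if i = j then 1 else 0 := by
    have : (EuclideanSpace.proj j : EuclideanSpace ℝ (Fin N) →L[ℝ] ℝ)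
        (EuclideanSpace.single i 1) = (EuclideanSpace.single i (1:ℝ)) j := rfl
    rw [this, EuclideanSpace.single_apply]
    simp [eq_comm]
  rw [ContinuousLinearMap.smul_apply, hproj]
  by_cases hij : i = j <;> simp [hij, smul_eq_mul] <;> ring

lemma Gfun_eq_norm_sq {N : ℕ} (x0 x : EuclideanSpace ℝ (Fin N)) :
    Gfun x0 x = ‖x - x0‖^2 := by
  rw [EuclideanSpace.norm_eq]
  rw [Real.sq_sqrt (by positivity)]
  exact Finset.sum_congr rfl fun k _ => by
    have : (x - x0) k = x k - x0 k := rfl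
    rw [this, Real.norm_eq_abs, sq_abs]

lemma Gfun_nonneg {N : ℕ} (x0 x : EuclideanSpace ℝ (Fin N)) : 0 ≤ Gfun x0 x := by
  rw [Gfun_eq_norm_sq]; positivity

set_option maxHeartbeats 2000000 in
/-- Hopf-type Lemma with zero-order term: if `u ∈ C²(Ω)` satisfies
`(L - c)u ≥ 0` on the connected open set `Ω` with `c ≥ 0` continuous, the
maximum set `F(u)` is a nonempty proper subset of `Ω`, and `max_Ω u ≥ 0`, then
`⟨A(y)ν, ν⟩ = 0` whenever `ν` is externally orthogonal to `F(u)` at `y`. -/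
theorem stmt8 {N : ℕ}
    (a : EuclideanSpace ℝ (Fin N) → Matrix (Fin N) (Fin N) ℝ)
    (b : EuclideanSpace ℝ (Fin N) → Fin N → ℝ)
    (c : EuclideanSpace ℝ (Fin N) → ℝ)
    (ha_cont : ∀ i j, Continuous fun x => a x i j)
    (hb_cont : ∀ j, Continuous fun x => b x j)
    (hc_cont : Continuous c) (hc_nonneg : ∀ x, 0 ≤ c x)
    (hPSD : ∀ x, (a x).PosSemidef)
    (Ω : Set (EuclideanSpace ℝ (Fin N))) (hΩo : IsOpen Ω) (hΩc : IsConnected Ω)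
    (u : EuclideanSpace ℝ (Fin N) → ℝ) (hu : ContDiffOn ℝ 2 u Ω)
    (hsub : ∀ x ∈ Ω,
      0 ≤ (∑ i, ∑ j, a x i j * pd2 u i j x) + (∑ j, b x j * pd u j x) - c x * u x)
    (m : ℝ) (hm : ∀ x ∈ Ω, u x ≤ m) (hm0 : 0 ≤ m)
    (F : Set (EuclideanSpace ℝ (Fin N))) (hF : F = {x ∈ Ω | u x = m})
    (hFne : F.Nonempty) (hFprop : F ≠ Ω) :
    ∀ y ∈ Ω ∩ frontier F, ∀ ν : EuclideanSpace ℝ (Fin N), ν ≠ 0 →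
      Metric.closedBall (y + ν) ‖ν‖ ⊆ Ω →
      Metric.closedBall (y + ν) ‖ν‖ ∩ F = {y} →
      ((a y).mulVec (fun j => ν j) ⬝ᵥ fun j => ν j) = 0 := by
  intro y hy ν hν hball hsingle
  by_contra hq0
  have hyΩ : y ∈ Ω := hy.1
  set x0 : EuclideanSpace ℝ (Fin N) := y + ν with hx0def
  set r : ℝ := ‖ν‖ with hrdef
  have hr : 0 < r := norm_pos_iff.2 hν
  have hysub : y - x0 = -ν := by rw [hx0def]; abel
  have hdist_yx0 : dist y x0 = r := by rw [dist_eq_norm, hysub, norm_neg]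
  have hyball : y ∈ Metric.closedBall x0 r := by
    rw [Metric.mem_closedBall, hdist_yx0]
  have hyF : y ∈ F := by
    have h1 : y ∈ Metric.closedBall x0 r ∩ F := by rw [hsingle]; rfl
    exact h1.2
  have huy : u y = m := by rw [hF] at hyF; exact hyF.2
  have hcoord : ∀ k, y k - x0 k = -(ν k) := by
    intro k
    have : (y - x0) k = y k - x0 k := rfl
    rw [← this, hysub]; rfl
  set q : ℝ := (a y).mulVec (fun j => ν j) ⬝ᵥ (fun j => ν j) with hqdef
  have hq : 0 < q := by
    have h0 := (hPSD y).dotProduct_mulVec_nonneg (fun j => ν j)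
    rw [show star (fun j => ν j) = fun j => ν j from funext fun j => rfl] at h0
    rw [dotProduct_comm] at h0
    exact lt_of_le_of_ne h0 (Ne.symm hq0)
  -- the quadratic form x ↦ ⟨a(x)(x - x0), x - x0⟩
  set Q : EuclideanSpace ℝ (Fin N) → ℝ :=
    fun x => ∑ i, ∑ j, a x i j * (x i - x0 i) * (x j - x0 j) with hQdef
  have hQcont : Continuous Q := by
    apply continuous_finset_sum; intro i _
    apply continuous_finset_sum; intro j _
    have hxi : Continuous fun x : EuclideanSpace ℝ (Fin N) => x i :=
      (EuclideanSpace.proj i : EuclideanSpace ℝ (Fin N) →L[ℝ] ℝ).continuous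
    have hxj : Continuous fun x : EuclideanSpace ℝ (Fin N) => x j :=
      (EuclideanSpace.proj j : EuclideanSpace ℝ (Fin N) →L[ℝ] ℝ).continuous
    exact ((ha_cont i j).mul (hxi.sub continuous_const)).mul (hxj.sub continuous_const)
  have hQy : Q y = q := by
    have h1 : q = ∑ i, (∑ j, a y i j * ν j) * ν i := by
      rw [hqdef]; simp [dotProduct, Matrix.mulVec]
    rw [hQdef, h1]
    refine Finset.sum_congr rfl fun i _ => ?_
    rw [Finset.sum_mul]
    refine Finset.sum_congr rfl fun j _ => ?_
    rw [hcoord i, hcoord j]; ring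
  -- bounds on the first order coefficients and on c over the closed ball
  set Rf : EuclideanSpace ℝ (Fin N) → ℝ :=
    fun x => (∑ i, a x i i) + ∑ j, b x j * (x j - x0 j) with hRfdef
  have hRcont : Continuous Rf := by
    apply Continuous.add
    · exact continuous_finset_sum _ fun i _ => ha_cont i i
    · apply continuous_finset_sum; intro j _
      have hxj : Continuous fun x : EuclideanSpace ℝ (Fin N) => x j :=
        (EuclideanSpace.proj j : EuclideanSpace ℝ (Fin N) →L[ℝ] ℝ).continuous
      exact (hb_cont j).mul (hxj.sub continuous_const)
  obtain ⟨M, hM⟩ := (isCompact_closedBall x0 r).exists_bound_of_continuousOn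
    hRcont.continuousOn
  have hM0 : 0 ≤ M := le_trans (norm_nonneg _) (hM x0 (Metric.mem_closedBall_self hr.le))
  obtain ⟨C, hC⟩ := (isCompact_closedBall x0 r).exists_bound_of_continuousOn
    hc_cont.continuousOn
  have hC0 : 0 ≤ C := le_trans (norm_nonneg _) (hC x0 (Metric.mem_closedBall_self hr.le))
  -- choice of α
  set α : ℝ := max 1 ((2*M + C)/(2*q) + 1) with hαdef
  have hα1 : (1:ℝ) ≤ α := le_max_left _ _
  have hαpos : (0:ℝ) < α := lt_of_lt_of_le one_pos hα1
  have hαgt : (2*M + C)/(2*q) < α := lt_of_lt_of_le (lt_add_one _) (le_max_right _ _)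
  have h2qα : 2*M + C < 2*q*α := by
    rw [div_lt_iff₀ (by positivity)] at hαgt; linarith
  have hkey : ∀ x ∈ Metric.closedBall x0 r, q/2 ≤ Q x →
      0 < 4*α^2 * Q x - 2*α*Rf x - c x := by
    intro x hx hQx
    have hRx : Rf x ≤ M := le_trans (le_abs_self _) (hM x hx)
    have hcx : c x ≤ C := le_trans (le_abs_self _) (hC x hx)
    nlinarith [mul_le_mul_of_nonneg_left hRx (by positivity : (0:ℝ) ≤ 2*α),
      mul_lt_mul_of_pos_right h2qα hαpos, sq_nonneg α,
      mul_le_mul_of_nonneg_right hQx (by positivity : (0:ℝ) ≤ 4*α^2)]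
  -- choice of δ
  obtain ⟨δ1, hδ1pos, hδ1Ω⟩ : ∃ δ1 > 0, Metric.closedBall y δ1 ⊆ Ω := by
    obtain ⟨e, he, hsubΩ⟩ := Metric.isOpen_iff.1 hΩo y hyΩ
    exact ⟨e/2, by positivity,
      (Metric.closedBall_subset_ball (by linarith)).trans hsubΩ⟩
  obtain ⟨δ2, hδ2pos, hδ2Q⟩ : ∃ δ2 > 0, ∀ x ∈ Metric.closedBall y δ2, q/2 ≤ Q x := by
    have hQyge : q/2 < Q y := by rw [hQy]; linarith
    have h1 : Q ⁻¹' Set.Ioi (q/2) ∈ 𝓝 y := hQcont.continuousAt (Ioi_mem_nhds hQyge)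
    obtain ⟨e, he, hsubQ⟩ := Metric.mem_nhds_iff.1 h1
    refine ⟨e/2, by positivity, fun x hx => ?_⟩
    have : x ∈ Metric.ball y e := lt_of_le_of_lt (Metric.mem_closedBall.1 hx) (by linarith)
    exact le_of_lt (hsubQ this)
  set δ : ℝ := min (min δ1 δ2) (r/2) with hδdef
  have hδpos : 0 < δ := lt_min (lt_min hδ1pos hδ2pos) (by positivity)
  have hδΩ : Metric.closedBall y δ ⊆ Ω :=
    (Metric.closedBall_subset_closedBall ((min_le_left _ _).trans (min_le_left _ _))).trans hδ1Ω
  have hδQ : ∀ x ∈ Metric.closedBall y δ, q/2 ≤ Q x := fun x hx =>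
    hδ2Q x (Metric.closedBall_subset_closedBall
      ((min_le_left _ _).trans (min_le_right _ _)) hx)
  have hδr : δ < r := lt_of_le_of_lt (min_le_right _ _) (by linarith)
  -- the compact set K and the gap μ
  set K : Set (EuclideanSpace ℝ (Fin N)) :=
    Metric.closedBall x0 r ∩ Metric.sphere y δ with hKdef
  have hKcomp : IsCompact K :=
    (isCompact_closedBall x0 r).inter_right Metric.isClosed_sphere
  have hKne : K.Nonempty := by
    refine ⟨y + (δ/r) • ν, ?_, ?_⟩
    · rw [Metric.mem_closedBall, dist_eq_norm]
      have h1 : y + (δ/r) • ν - x0 = (δ/r - 1) • ν := by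
        rw [hx0def, sub_smul, one_smul]; abel
      rw [h1, norm_smul, Real.norm_eq_abs]
      have h2 : |δ/r - 1| = 1 - δ/r := by
        rw [abs_of_nonpos]
        · ring
        · rw [sub_nonpos, div_le_one hr]; linarith
      rw [h2]
      have h3 : (1 - δ/r) * r = r - δ := by field_simp
      rw [h3]; linarith
    · rw [Metric.mem_sphere, dist_eq_norm]
      have h1 : y + (δ/r) • ν - y = (δ/r) • ν := by abel
      rw [h1, norm_smul, Real.norm_eq_abs, abs_of_nonneg (by positivity : (0:ℝ) ≤ δ/r)]
      field_simp; rfl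
  have hKΩ : K ⊆ Ω := fun x hx => hball hx.1
  have hKu : ∀ x ∈ K, u x < m := by
    intro x hx
    rcases eq_or_lt_of_le (hm x (hKΩ hx)) with h | h
    · exfalso
      have hxF : x ∈ F := by rw [hF]; exact ⟨hKΩ hx, h⟩
      have h1 : x ∈ Metric.closedBall x0 r ∩ F := ⟨hx.1, hxF⟩
      rw [hsingle] at h1
      have hxy : x = y := Set.mem_singleton_iff.1 h1
      rw [hxy] at hx
      have h2 := hx.2
      rw [Metric.mem_sphere, dist_self] at h2
      exact (ne_of_gt hδpos) h2.symm
    · exact h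
  obtain ⟨z0, hz0K, hz0max⟩ := hKcomp.exists_isMaxOn hKne (hu.continuousOn.mono hKΩ)
  set μ : ℝ := m - u z0 with hμdef
  have hμpos : 0 < μ := sub_pos.2 (hKu z0 hz0K)
  set ε : ℝ := μ with hεdef
  have hεpos : 0 < ε := hμpos
  -- the barrier function
  set w : EuclideanSpace ℝ (Fin N) → ℝ := wfun x0 α r with hwdef
  have hwzero : ∀ x, dist x x0 = r → w x = 0 := by
    intro x hx
    rw [hwdef, wfun, Gfun_eq_norm_sq, ← dist_eq_norm, hx, sub_self]
  have hwy : w y = 0 := hwzero y hdist_yx0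
  have hwle : ∀ x, w x ≤ Real.exp (-α * Gfun x0 x) := by
    intro x
    rw [hwdef, wfun]
    have := Real.exp_pos (-α * r^2)
    linarith
  have hwone : ∀ x, w x ≤ 1 := by
    intro x
    have h1 : Real.exp (-α * Gfun x0 x) ≤ 1 := by
      rw [Real.exp_le_one_iff]
      have := Gfun_nonneg x0 x
      nlinarith
    linarith [hwle x]
  set v : EuclideanSpace ℝ (Fin N) → ℝ := fun x => u x - m + ε * w x with hvdef
  have hvy : v y = 0 := by rw [hvdef]; simp [huy, hwy]
  -- differentiability infrastructure
  have hudiffΩ : ∀ x ∈ Ω, DifferentiableAt ℝ u x := fun x hx =>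
    (hu.contDiffAt (hΩo.mem_nhds hx)).differentiableAt (by norm_num)
  have hwdiff : ∀ x, DifferentiableAt ℝ w x := fun x =>
    (hasFDerivAt_wfun x0 α r x).differentiableAt
  have hvdiffΩ : ∀ x ∈ Ω, DifferentiableAt ℝ v x := fun x hx =>
    ((hudiffΩ x hx).sub_const m).add ((hwdiff x).const_mul ε)
  have hfvΩ : ∀ x ∈ Ω, fderiv ℝ v x = fderiv ℝ u x + ε • fderiv ℝ w x := fun x hx =>
    (((hudiffΩ x hx).hasFDerivAt.sub_const m).add
      ((hwdiff x).hasFDerivAt.const_mul ε)).fderiv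
  have hpdv : ∀ (j : Fin N), ∀ x ∈ Ω, pd v j x = pd u j x + ε * pd w j x := by
    intro j x hx
    rw [pd, pd, pd, hfvΩ x hx]; simp
  have hpdudiff : ∀ (j : Fin N), ∀ x ∈ Ω, DifferentiableAt ℝ (fun z => pd u j z) x := by
    intro j x hx
    have h1 : ContDiffAt ℝ 2 u x := hu.contDiffAt (hΩo.mem_nhds hx)
    have h2 : ContDiffAt ℝ 1 (fderiv ℝ u) x := h1.fderiv_right (by norm_num)
    have h3 : DifferentiableAt ℝ (fderiv ℝ u) x := h2.differentiableAt (by norm_num)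
    exact h3.clm_apply (differentiableAt_const _)
  have hpdvdiff : ∀ (j : Fin N), ∀ x ∈ Ω, DifferentiableAt ℝ (fun z => pd v j z) x := by
    intro j x hx
    have hev : (fun z => pd v j z) =ᶠ[𝓝 x] fun z => pd u j z + ε * pd w j z := by
      filter_upwards [hΩo.mem_nhds hx] with z hz using hpdv j z hz
    rw [hev.differentiableAt_iff]
    exact (hpdudiff j x hx).add ((differentiableAt_pd_wfun x0 α r j x).const_mul ε)
  have hpd2v : ∀ (i j : Fin N), ∀ x ∈ Ω, pd2 v i j x = pd2 u i j x + ε * pd2 w i j x := by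
    intro i j x hx
    have hev : (fun z => pd v j z) =ᶠ[𝓝 x] fun z => pd u j z + ε * pd w j z := by
      filter_upwards [hΩo.mem_nhds hx] with z hz using hpdv j z hz
    rw [pd2, hev.fderiv_eq]
    have hfd : fderiv ℝ (fun z => pd u j z + ε * pd w j z) x
        = fderiv ℝ (fun z => pd u j z) x + ε • fderiv ℝ (fun z => pd w j z) x :=
      ((hpdudiff j x hx).hasFDerivAt.add
        ((differentiableAt_pd_wfun x0 α r j x).hasFDerivAt.const_mul ε)).fderiv
    rw [hfd]
    simp [pd2]
  -- the key maximum principle estimate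
  have hvle : ∀ x ∈ Metric.closedBall x0 r ∩ Metric.closedBall y δ, v x ≤ 0 := by
    by_contra hcon
    push_neg at hcon
    obtain ⟨x1, hx1mem, hx1pos⟩ := hcon
    have hDcomp : IsCompact (Metric.closedBall x0 r ∩ Metric.closedBall y δ) :=
      (isCompact_closedBall x0 r).inter_right Metric.isClosed_closedBall
    have hDΩ : Metric.closedBall x0 r ∩ Metric.closedBall y δ ⊆ Ω := fun x hx => hball hx.1
    have hwcont : Continuous w := continuous_iff_continuousAt.2 fun x => (hwdiff x).continuousAt
    have hvcont : ContinuousOn v (Metric.closedBall x0 r ∩ Metric.closedBall y δ) := by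
      apply ContinuousOn.add
      · exact (hu.continuousOn.mono hDΩ).sub continuousOn_const
      · exact continuousOn_const.mul hwcont.continuousOn
    obtain ⟨z, hzmem, hzmax⟩ := hDcomp.exists_isMaxOn ⟨x1, hx1mem⟩ hvcont
    have hvz : 0 < v z := lt_of_lt_of_le hx1pos (hzmax hx1mem)
    have hzΩ : z ∈ Ω := hDΩ hzmem
    have hzx0 : dist z x0 < r := by
      rcases lt_or_eq_of_le (Metric.mem_closedBall.1 hzmem.1) with h | h
      · exact h
      · exfalso
        have hwz : w z = 0 := hwzero z h
        have h1 : v z = u z - m := by rw [hvdef]; simp [hwz]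
        have h2 := hm z hzΩ
        rw [h1] at hvz
        linarith
    have hzy : dist z y < δ := by
      rcases lt_or_eq_of_le (Metric.mem_closedBall.1 hzmem.2) with h | h
      · exact h
      · exfalso
        have hzK : z ∈ K := ⟨hzmem.1, h⟩
        have h1 : u z ≤ u z0 := hz0max hzK
        have h2 : ε * w z ≤ ε * 1 :=
          mul_le_mul_of_nonneg_left (hwone z) hεpos.le
        have h3 : v z = u z - m + ε * w z := rfl
        rw [h3] at hvz
        have hμ : μ = m - u z0 := rfl
        linarith
    have hQz : q/2 ≤ Q z := hδQ z hzmem.2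
    have hDopen : IsOpen (Metric.ball x0 r ∩ Metric.ball y δ) :=
      Metric.isOpen_ball.inter Metric.isOpen_ball
    have hzD : z ∈ Metric.ball x0 r ∩ Metric.ball y δ := ⟨hzx0, hzy⟩
    have hloc : IsLocalMax v z := by
      filter_upwards [hDopen.mem_nhds hzD] with x hx
      exact hzmax ⟨Metric.ball_subset_closedBall hx.1, Metric.ball_subset_closedBall hx.2⟩
    have hfvz : fderiv ℝ v z = 0 := hloc.fderiv_eq_zero
    have hpdvz : ∀ j, pd v j z = 0 := by
      intro j; rw [pd, hfvz]; rfl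
    -- Hessian nonpositivity in every direction
    obtain ⟨ρ, hρpos, hρsub⟩ := Metric.isOpen_iff.1 hDopen z hzD
    have hH : ∀ d : EuclideanSpace ℝ (Fin N),
        (∑ i, ∑ j, d i * d j * pd2 v i j z) ≤ 0 := by
      intro d
      by_cases hd : d = 0
      · subst hd
        have hzero : ∀ i : Fin N, (0 : EuclideanSpace ℝ (Fin N)) i = 0 := fun i => rfl
        simp [hzero]
      · have hdnorm : 0 < ‖d‖ := norm_pos_iff.2 hd
        set t1 : ℝ := ρ/(2*‖d‖) with ht1def
        have ht1pos : 0 < t1 := by positivity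
        have hmem2 : ∀ t ∈ Set.Icc (-t1) t1, z + t • d ∈ Metric.ball x0 r ∩ Metric.ball y δ := by
          intro t ht
          apply hρsub
          rw [Metric.mem_ball, dist_eq_norm]
          have h1 : z + t • d - z = t • d := by abel
          rw [h1, norm_smul, Real.norm_eq_abs]
          have h2 : |t| ≤ t1 := abs_le.2 ⟨ht.1, ht.2⟩
          have h3 : t1 * ‖d‖ = ρ/2 := by rw [ht1def]; field_simp
          nlinarith
        have hmemΩ2 : ∀ t ∈ Set.Icc (-t1) t1, z + t • d ∈ Ω := fun t ht =>
          hball (Metric.ball_subset_closedBall (hmem2 t ht).1)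
        have hlined : ∀ t : ℝ, HasDerivAt (fun s : ℝ => z + s • d) d t := by
          intro t
          have h1 := (hasDerivAt_id t).smul_const d
          rw [one_smul] at h1
          exact h1.const_add z
        have hφd : ∀ t ∈ Set.Icc (-t1) t1, HasDerivAt (fun s => v (z + s • d))
            ((fun t : ℝ => (fderiv ℝ v (z + t • d)) d) t) t := by
          intro t ht
          exact ((hvdiffΩ _ (hmemΩ2 t ht)).hasFDerivAt).comp_hasDerivAt t (hlined t)
        have hφ2 : HasDerivAt (fun t : ℝ => (fderiv ℝ v (z + t • d)) d)
            (∑ j, d j * ∑ i, d i * pd2 v i j z) 0 := by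
          have hφ'eq : (fun t : ℝ => (fderiv ℝ v (z + t • d)) d)
              = fun t => ∑ j, d j * pd v j (z + t • d) := by
            funext t
            exact clm_apply_eq_sum _ d
          rw [hφ'eq]
          refine HasDerivAt.fun_sum fun j _ => ?_
          have h3 : HasFDerivAt (fun x => pd v j x) (fderiv ℝ (fun x => pd v j x) z)
              ((fun s : ℝ => z + s • d) 0) := by
            have h4 := (hpdvdiff j z hzΩ).hasFDerivAt
            simpa using h4
          have h2 : HasDerivAt (fun t : ℝ => pd v j (z + t • d))
              ((fderiv ℝ (fun x => pd v j x) z) d) 0 := by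
            have h6 := h3.comp_hasDerivAt 0 (hlined 0); exact h6
          have h5 : (fderiv ℝ (fun x => pd v j x) z) d = ∑ i, d i * pd2 v i j z :=
            clm_apply_eq_sum _ d
          rw [h5] at h2
          exact h2.const_mul (d j)
        have hφmax : ∀ t ∈ Set.Icc (-t1) t1, v (z + t • d) ≤ v (z + (0:ℝ) • d) := by
          intro t ht
          have h0 : z + (0:ℝ) • d = z := by simp
          rw [h0]
          exact hzmax ⟨Metric.ball_subset_closedBall (hmem2 t ht).1,
            Metric.ball_subset_closedBall (hmem2 t ht).2⟩
        have hq2 := secondDeriv_nonpos_at_max ht1pos hφd hφ2 hφmax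
        calc (∑ i, ∑ j, d i * d j * pd2 v i j z)
            = ∑ j, ∑ i, d i * d j * pd2 v i j z := Finset.sum_comm
          _ = ∑ j, d j * ∑ i, d i * pd2 v i j z := Finset.sum_congr rfl fun j _ => by
              rw [Finset.mul_sum]
              exact Finset.sum_congr rfl fun i _ => by ring
          _ ≤ 0 := hq2
    have htrace : (∑ i, ∑ j, a z i j * pd2 v i j z) ≤ 0 :=
      psd_trace_nonpos (hPSD z) fun d => hH (WithLp.toLp 2 d)
    -- positivity of (L - c) w at z
    have hEpos : 0 < Real.exp (-α * Gfun x0 z) := Real.exp_pos _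
    have hsumA : (∑ i, ∑ j, a z i j * pd2 w i j z)
        = (4*α^2 * Q z - 2*α * (∑ i, a z i i)) * Real.exp (-α * Gfun x0 z) := by
      have h1 : ∀ i j : Fin N, a z i j * pd2 w i j z
          = a z i j * (z i - x0 i) * (z j - x0 j) * (4*α^2 * Real.exp (-α * Gfun x0 z))
            - (if i = j then a z i j * ((2*α) * Real.exp (-α * Gfun x0 z)) else 0) := by
        intro i j
        rw [hwdef, pd2_wfun]
        split_ifs with h <;> ring
      calc (∑ i, ∑ j, a z i j * pd2 w i j z)
          = ∑ i, ∑ j, (a z i j * (z i - x0 i) * (z j - x0 j)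
              * (4*α^2 * Real.exp (-α * Gfun x0 z))
            - (if i = j then a z i j * ((2*α) * Real.exp (-α * Gfun x0 z)) else 0)) :=
            Finset.sum_congr rfl fun i _ => Finset.sum_congr rfl fun j _ => h1 i j
        _ = (∑ i, ∑ j, a z i j * (z i - x0 i) * (z j - x0 j))
              * (4*α^2 * Real.exp (-α * Gfun x0 z))
            - ∑ i, a z i i * ((2*α) * Real.exp (-α * Gfun x0 z)) := by
            rw [Finset.sum_mul, ← Finset.sum_sub_distrib]
            refine Finset.sum_congr rfl fun i _ => ?_
            rw [Finset.sum_mul, Finset.sum_sub_distrib, Finset.sum_ite_eq]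
            simp
        _ = (4*α^2 * Q z - 2*α * (∑ i, a z i i)) * Real.exp (-α * Gfun x0 z) := by
            have hQz' : Q z = ∑ i, ∑ j, a z i j * (z i - x0 i) * (z j - x0 j) := rfl
            have hS : (∑ i, a z i i * ((2*α) * Real.exp (-α * Gfun x0 z)))
                = (∑ i, a z i i) * ((2*α) * Real.exp (-α * Gfun x0 z)) :=
              (Finset.sum_mul _ _ _).symm
            rw [hQz', hS]
            ring
    have hsumB : (∑ j, b z j * pd w j z)
        = (-2*α * (∑ j, b z j * (z j - x0 j))) * Real.exp (-α * Gfun x0 z) := by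
      have h1 : ∀ j : Fin N, b z j * pd w j z
          = (b z j * (z j - x0 j)) * ((-2*α) * Real.exp (-α * Gfun x0 z)) := by
        intro j
        rw [hwdef, pd_wfun]
        ring
      calc (∑ j, b z j * pd w j z)
          = ∑ j, (b z j * (z j - x0 j)) * ((-2*α) * Real.exp (-α * Gfun x0 z)) :=
            Finset.sum_congr rfl fun j _ => h1 j
        _ = (∑ j, b z j * (z j - x0 j)) * ((-2*α) * Real.exp (-α * Gfun x0 z)) :=
            (Finset.sum_mul _ _ _).symm
        _ = (-2*α * (∑ j, b z j * (z j - x0 j))) * Real.exp (-α * Gfun x0 z) := by ring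
    have hwbound : c z * w z ≤ c z * Real.exp (-α * Gfun x0 z) :=
      mul_le_mul_of_nonneg_left (hwle z) (hc_nonneg z)
    have hLw : 0 < (∑ i, ∑ j, a z i j * pd2 w i j z) + (∑ j, b z j * pd w j z) - c z * w z := by
      rw [hsumA, hsumB]
      have hk := hkey z hzmem.1 hQz
      have hRfz : Rf z = (∑ i, a z i i) + ∑ j, b z j * (z j - x0 j) := rfl
      rw [hRfz] at hk
      nlinarith [mul_pos hEpos hk, hwbound]
    -- combine everything at z
    have hLu := hsub z hzΩ
    have hcm : 0 ≤ c z * m := mul_nonneg (hc_nonneg z) hm0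
    have h1 : (∑ i, ∑ j, a z i j * pd2 v i j z)
        = (∑ i, ∑ j, a z i j * pd2 u i j z) + ε * (∑ i, ∑ j, a z i j * pd2 w i j z) := by
      have h2 : ∀ i j : Fin N, a z i j * pd2 v i j z
          = a z i j * pd2 u i j z + ε * (a z i j * pd2 w i j z) := by
        intro i j
        rw [hpd2v i j z hzΩ]
        ring
      calc (∑ i, ∑ j, a z i j * pd2 v i j z)
          = ∑ i, ∑ j, (a z i j * pd2 u i j z + ε * (a z i j * pd2 w i j z)) :=
            Finset.sum_congr rfl fun i _ => Finset.sum_congr rfl fun j _ => h2 i j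
        _ = (∑ i, ∑ j, a z i j * pd2 u i j z) + ε * (∑ i, ∑ j, a z i j * pd2 w i j z) := by
            simp [Finset.sum_add_distrib, Finset.mul_sum]
    have h3 : (∑ j, b z j * pd v j z)
        = (∑ j, b z j * pd u j z) + ε * (∑ j, b z j * pd w j z) := by
      calc (∑ j, b z j * pd v j z)
          = ∑ j, (b z j * pd u j z + ε * (b z j * pd w j z)) :=
            Finset.sum_congr rfl fun j _ => by rw [hpdv j z hzΩ]; ring
        _ = (∑ j, b z j * pd u j z) + ε * (∑ j, b z j * pd w j z) := by
            simp [Finset.sum_add_distrib, Finset.mul_sum]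
    have hvzdef : v z = u z - m + ε * w z := rfl
    have hbz : (∑ j, b z j * pd v j z) = 0 :=
      Finset.sum_eq_zero fun j _ => by rw [hpdvz j]; ring
    have hcv : 0 ≤ c z * v z := mul_nonneg (hc_nonneg z) hvz.le
    have hpos : 0 < (∑ i, ∑ j, a z i j * pd2 v i j z) + (∑ j, b z j * pd v j z) - c z * v z := by
      rw [h1, h3, hvzdef]
      have h6 := mul_pos hεpos hLw
      nlinarith [hLu, hcm]
    rw [hbz] at hpos
    linarith [htrace, hcv]
  -- final contradiction via the boundary point y
  have hulocmax : IsLocalMax u y := by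
    filter_upwards [hΩo.mem_nhds hyΩ] with x hx
    rw [huy]; exact hm x hx
  have hfu : fderiv ℝ u y = 0 := hulocmax.fderiv_eq_zero
  have hfw : fderiv ℝ w y = (-α * Real.exp (-α * Gfun x0 y)) • Gderiv x0 y :=
    (hasFDerivAt_wfun x0 α r y).fderiv
  have hsumν : (∑ k, 2*(y k - x0 k) * ν k) = -2 * ∑ k, (ν k)^2 := by
    rw [Finset.mul_sum]
    exact Finset.sum_congr rfl fun k _ => by rw [hcoord k]; ring
  have hν2pos : 0 < ∑ k, (ν k)^2 := by
    have h1 : (∑ k, (ν k)^2) = ‖ν‖^2 := by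
      have h2 := Gfun_eq_norm_sq (0 : EuclideanSpace ℝ (Fin N)) ν
      simpa [Gfun] using h2
    rw [h1]
    have : (0:ℝ) < ‖ν‖ := hr
    positivity
  have hfwν : fderiv ℝ w y ν = 2*α*Real.exp (-α * Gfun x0 y) * ∑ k, (ν k)^2 := by
    rw [hfw, ContinuousLinearMap.smul_apply, Gderiv_apply, hsumν, smul_eq_mul]; ring
  have hfv : HasFDerivAt v (fderiv ℝ u y + ε • fderiv ℝ w y) y :=
    ((hudiffΩ y hyΩ).hasFDerivAt.sub_const m).add ((hwdiff y).hasFDerivAt.const_mul ε)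
  have hfvν : (fderiv ℝ u y + ε • fderiv ℝ w y) ν
      = ε * (2*α*Real.exp (-α * Gfun x0 y) * ∑ k, (ν k)^2) := by
    rw [ContinuousLinearMap.add_apply, hfu, ContinuousLinearMap.smul_apply, hfwν]
    simp
  set t0 : ℝ := min (1/2 : ℝ) (δ/(2*r)) with ht0def
  have ht0pos : 0 < t0 := lt_min (by norm_num) (by positivity)
  have hline : HasDerivAt (fun t : ℝ => y + t • ν) ν 0 := by
    have h1 := (hasDerivAt_id (0:ℝ)).smul_const ν
    rw [one_smul] at h1
    exact h1.const_add y
  have hφd : HasDerivAt (fun t : ℝ => v (y + t • ν))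
      ((fderiv ℝ u y + ε • fderiv ℝ w y) ν) 0 := by
    have h2 : HasFDerivAt v (fderiv ℝ u y + ε • fderiv ℝ w y) ((fun t : ℝ => y + t • ν) 0) := by
      simpa using hfv
    exact h2.comp_hasDerivAt 0 hline
  have hφle : ∀ t ∈ Set.Ioc (0:ℝ) t0, v (y + t • ν) ≤ v (y + (0:ℝ) • ν) := by
    intro t ht
    have hmem : y + t • ν ∈ Metric.closedBall x0 r ∩ Metric.closedBall y δ := by
      constructor
      · rw [Metric.mem_closedBall, dist_eq_norm]
        have h1 : y + t • ν - x0 = (t - 1) • ν := by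
          rw [hx0def, sub_smul, one_smul]; abel
        rw [h1, norm_smul, Real.norm_eq_abs]
        have ht1 : t ≤ 1/2 := le_trans ht.2 (min_le_left _ _)
        have h2 : |t - 1| = 1 - t := by
          rw [abs_of_nonpos (by linarith : t - 1 ≤ 0)]; ring
        rw [h2]
        nlinarith [ht.1, hr]
      · rw [Metric.mem_closedBall, dist_eq_norm]
        have h1 : y + t • ν - y = t • ν := by abel
        rw [h1, norm_smul, Real.norm_eq_abs, abs_of_pos ht.1]
        have ht2 : t ≤ δ/(2*r) := le_trans ht.2 (min_le_right _ _)
        have h3 : (δ/(2*r)) * r = δ/2 := by field_simp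
        nlinarith [ht.1, hr, hδpos]
    have h4 := hvle _ hmem
    have h0 : y + (0:ℝ) • ν = y := by simp
    rw [h0, hvy]
    exact h4
  have hder := rightDeriv_nonpos ht0pos hφd hφle
  rw [hfvν] at hder
  have hX : (0:ℝ) < 2*α*Real.exp (-α * Gfun x0 y) * ∑ k, (ν k)^2 :=
    mul_pos (by positivity) hν2pos
  nlinarith [mul_pos hεpos hX]
end

section
/- Exterior ball neighborhood basis (lens construction): Let A(x) be a continuous, symmetric, positive semidefinite matrix field on R^N with A(x₀) ≠ 0. Then there exists a basis of connected open neighborhoods Ω of x₀ such that for every y ∈ ∂Ω there exists ν ∈ R^N \ {0} with: the closed ball B̄(y+ν, |ν|) intersects Ω̄ exactly at y, and ⟨A(y)ν, ν⟩ > 0. Explicitly, for a unit vector h₀ with ⟨A(x₀)h₀, h₀⟩ > 0 and ε > 0 small, the lens Ω(ε) = B(x₀ + ε⁻¹h₀, ε⁻¹ + ε²) ∩ B(x₀ − ε⁻¹h₀, ε⁻¹ + ε²) has these properties. -/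
open Matrix Metric

lemma aux_tangent {E : Type*} [NormedAddCommGroup E] [InnerProductSpace ℝ E]
    {c y z : E} {R t : ℝ} (ht : 0 < t) (hy : ‖y - c‖ = R)
    (hz1 : ‖z - (y + t • (y - c))‖ ≤ t * R) (hz2 : ‖z - c‖ ≤ R) : z = y := by
  have hR : 0 ≤ R := hy ▸ norm_nonneg _
  have e1 : z - c = (z - y) + (y - c) := by abel
  have e2 : z - (y + t • (y - c)) = (z - y) - t • (y - c) := by abel
  have h1 : ‖(z - y) + (y - c)‖ ^ 2 ≤ R ^ 2 := by
    rw [← e1]; exact pow_le_pow_left₀ (norm_nonneg _) hz2 2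
  have h2 : ‖(z - y) - t • (y - c)‖ ^ 2 ≤ (t * R) ^ 2 := by
    rw [← e2]; exact pow_le_pow_left₀ (norm_nonneg _) hz1 2
  rw [norm_add_sq_real] at h1
  rw [norm_sub_sq_real, real_inner_smul_right, norm_smul, Real.norm_eq_abs,
    abs_of_pos ht] at h2
  rw [hy] at h1 h2
  have hu : ‖z - y‖ ^ 2 ≤ 0 := by nlinarith [sq_nonneg ‖z - y‖]
  have h0 : ‖z - y‖ = 0 := by nlinarith [norm_nonneg (z - y), sq_nonneg ‖z - y‖]
  exact sub_eq_zero.mp (norm_eq_zero.mp h0)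

lemma aux_tangent_set {E : Type*} [NormedAddCommGroup E] [InnerProductSpace ℝ E]
    {c y : E} {R t : ℝ} (ht : 0 < t) (hR : 0 < R) (hy : ‖y - c‖ = R)
    {S : Set E} (hS : S ⊆ closedBall c R) (hyS : y ∈ S) :
    closedBall (y + t • (y - c)) ‖t • (y - c)‖ ∩ S = {y} := by
  have hn : ‖t • (y - c)‖ = t * R := by
    rw [norm_smul, Real.norm_eq_abs, abs_of_pos ht, hy]
  ext z
  simp only [Set.mem_inter_iff, mem_closedBall, Set.mem_singleton_iff]
  constructor
  · rintro ⟨h1, h2⟩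
    refine aux_tangent ht hy ?_ ?_
    · rw [hn] at h1; rw [← dist_eq_norm]; exact h1
    · rw [← dist_eq_norm]; exact hS h2
  · rintro rfl
    exact ⟨by rw [dist_self_add_right], hyS⟩

def auxQ {N : ℕ} (A : EuclideanSpace ℝ (Fin N) → Matrix (Fin N) (Fin N) ℝ)
    (y : EuclideanSpace ℝ (Fin N)) (w : Fin N → ℝ) : ℝ :=
  (A y).mulVec w ⬝ᵥ w

set_option maxHeartbeats 1000000 in
/-- Exterior ball neighborhood basis (lens construction): if `A(x)` is a
continuous symmetric PSD matrix field with `A(x₀) ≠ 0`, then `x₀` has a basis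
of connected open neighborhoods `Ω` such that every boundary point `y` of `Ω`
admits an exterior ball touching `Ω̄` only at `y` along a direction `ν` with
`⟨A(y)ν, ν⟩ > 0`. -/
theorem stmt14 {N : ℕ}
    (A : EuclideanSpace ℝ (Fin N) → Matrix (Fin N) (Fin N) ℝ)
    (hA_cont : ∀ i j, Continuous fun x => A x i j)
    (hA_symm : ∀ x, (A x).IsSymm)
    (hA_psd : ∀ x, (A x).PosSemidef)
    (x₀ : EuclideanSpace ℝ (Fin N)) (hA0 : A x₀ ≠ 0) :
    ∀ U : Set (EuclideanSpace ℝ (Fin N)), IsOpen U → x₀ ∈ U →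
      ∃ Ω : Set (EuclideanSpace ℝ (Fin N)),
        IsOpen Ω ∧ IsConnected Ω ∧ x₀ ∈ Ω ∧ Ω ⊆ U ∧
        ∀ y ∈ frontier Ω, ∃ ν : EuclideanSpace ℝ (Fin N), ν ≠ 0 ∧
          Metric.closedBall (y + ν) ‖ν‖ ∩ closure Ω = {y} ∧
          0 < ((A y).mulVec (fun j => ν j) ⬝ᵥ fun j => ν j) := by
  classical
  intro U hU hx₀U
  -- nonnegativity of the form
  have hQ0 : ∀ (y : EuclideanSpace ℝ (Fin N)) (w : Fin N → ℝ), 0 ≤ auxQ A y w := by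
    intro y w
    have := (hA_psd y).dotProduct_mulVec_nonneg w
    simpa [auxQ, dotProduct_comm] using this
  -- negation invariance
  have hQneg : ∀ (y : EuclideanSpace ℝ (Fin N)) (w : Fin N → ℝ), auxQ A y (-w) = auxQ A y w := by
    intro y w
    simp [auxQ, Matrix.mulVec_neg, neg_dotProduct, dotProduct_neg]
  -- find a direction where the form at x₀ is positive
  have hwex : ∃ w : Fin N → ℝ, 0 < auxQ A x₀ w := by
    by_contra h
    push_neg at h
    have hzero : ∀ w, auxQ A x₀ w = 0 := fun w => le_antisymm (h w) (hQ0 x₀ w)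
    apply hA0
    ext i j
    have hs : A x₀ j i = A x₀ i j := by
      have h' := hA_symm x₀
      rw [Matrix.IsSymm] at h'
      rw [← Matrix.transpose_apply (A x₀) i j, h']
    have h1 := hzero (Pi.single i 1)
    have h2 := hzero (Pi.single j 1)
    have h3 := hzero (Pi.single i 1 + Pi.single j 1)
    simp only [auxQ, Matrix.mulVec_add, Matrix.mulVec_single_one, Matrix.col_apply, add_dotProduct,
      dotProduct_add, dotProduct_single, single_dotProduct, mul_one, one_mul,
      Pi.add_apply] at h1 h2 h3
    show A x₀ i j = 0
    linarith
  obtain ⟨w, hw⟩ := hwex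
  set w' : EuclideanSpace ℝ (Fin N) := (WithLp.equiv 2 (∀ _ : Fin N, ℝ)).symm w with hw'def
  have hw'app : ∀ j, w' j = w j := fun j => rfl
  have hw'0 : w' ≠ 0 := by
    intro h
    have hweq : w = 0 := by
      funext j
      have := hw'app j
      rw [h] at this
      simpa using this.symm
    rw [hweq] at hw
    simp [auxQ] at hw
  set h₀ : EuclideanSpace ℝ (Fin N) := ‖w'‖⁻¹ • w' with hh₀def
  have hh₀ : ‖h₀‖ = 1 := norm_smul_inv_norm hw'0
  have hw'norm : 0 < ‖w'‖ := norm_pos_iff.mpr hw'0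
  have hq0 : 0 < auxQ A x₀ (fun j => h₀ j) := by
    have happ : (fun j => h₀ j) = ‖w'‖⁻¹ • w := by
      funext j
      show (‖w'‖⁻¹ • w') j = ‖w'‖⁻¹ * w j
      rw [PiLp.smul_apply, hw'app, smul_eq_mul]
    rw [happ]
    have : auxQ A x₀ (‖w'‖⁻¹ • w) = ‖w'‖⁻¹ ^ 2 * auxQ A x₀ w := by
      simp only [auxQ, Matrix.mulVec_smul, dotProduct_smul, smul_dotProduct, smul_eq_mul]
      ring
    rw [this]
    exact mul_pos (pow_pos (inv_pos.mpr hw'norm) 2) hw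
  -- continuity of the form
  have hQcont : Continuous fun p : EuclideanSpace ℝ (Fin N) × EuclideanSpace ℝ (Fin N) => auxQ A p.1 (fun j => p.2 j) := by
    simp only [auxQ, Matrix.mulVec, dotProduct]
    apply continuous_finset_sum
    intro i _
    refine Continuous.mul ?_ ((continuous_apply i).comp ((PiLp.continuous_ofLp 2 _).comp continuous_snd))
    apply continuous_finset_sum
    intro j _
    exact ((hA_cont i j).comp continuous_fst).mul
      ((continuous_apply j).comp ((PiLp.continuous_ofLp 2 _).comp continuous_snd))
  -- open positivity region
  have hopen : IsOpen {p : EuclideanSpace ℝ (Fin N) × EuclideanSpace ℝ (Fin N) | 0 < auxQ A p.1 (fun j => p.2 j)} :=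
    isOpen_lt continuous_const hQcont
  obtain ⟨δ, hδpos, hδ⟩ := Metric.isOpen_iff.mp hopen (x₀, h₀) hq0
  have hkey : ∀ y v : EuclideanSpace ℝ (Fin N), dist y x₀ < δ → dist v h₀ < δ → 0 < auxQ A y (fun j => v j) := by
    intro y v h1 h2
    have hmem : (y, v) ∈ Metric.ball (x₀, h₀) δ := by
      rw [mem_ball, Prod.dist_eq]
      exact max_lt h1 h2
    exact hδ hmem
  -- radius inside U
  obtain ⟨r, hrpos, hrU⟩ := Metric.isOpen_iff.mp hU x₀ hx₀U
  -- choose ε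
  set ε : ℝ := min 1 (min (δ ^ 2 / 6) (r ^ 2 / 6)) with hεdef
  have hε : 0 < ε := lt_min one_pos (lt_min (by positivity) (by positivity))
  have hε1 : ε ≤ 1 := min_le_left _ _
  have hεδ : 3 * ε < δ ^ 2 := by
    have : ε ≤ δ ^ 2 / 6 := le_trans (min_le_right _ _) (min_le_left _ _)
    nlinarith
  have hεr : 3 * ε < r ^ 2 := by
    have : ε ≤ r ^ 2 / 6 := le_trans (min_le_right _ _) (min_le_right _ _)
    nlinarith
  have hεne : ε ≠ 0 := ne_of_gt hε
  set R : ℝ := ε⁻¹ + ε ^ 2 with hRdef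
  have hRpos : 0 < R := by positivity
  have hR2 : R ^ 2 = ε⁻¹ ^ 2 + (2 * ε + ε ^ 4) := by
    rw [hRdef]
    field_simp
    ring
  have hε3 : ε ^ 3 ≤ 1 := pow_le_one₀ hε.le hε1
  have hε2 : ε ^ 2 ≤ 1 := pow_le_one₀ hε.le hε1
  have hε4 : ε ^ 4 ≤ ε := by nlinarith [hε3, hε]
  set cp : EuclideanSpace ℝ (Fin N) := x₀ + ε⁻¹ • h₀ with hcpdef
  set cm : EuclideanSpace ℝ (Fin N) := x₀ - ε⁻¹ • h₀ with hcmdef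
  set Ω : Set (EuclideanSpace ℝ (Fin N)) := ball cp R ∩ ball cm R with hΩdef
  have hΩopen : IsOpen Ω := (isOpen_ball).inter isOpen_ball
  have ha : ‖ε⁻¹ • h₀‖ = ε⁻¹ := by
    rw [norm_smul, Real.norm_eq_abs, abs_of_pos (by positivity : (0:ℝ) < ε⁻¹), hh₀, mul_one]
  have hx₀Ω : x₀ ∈ Ω := by
    constructor
    · rw [mem_ball, dist_eq_norm]
      have : x₀ - cp = -(ε⁻¹ • h₀) := by rw [hcpdef]; abel
      rw [this, norm_neg, ha]
      nlinarith
    · rw [mem_ball, dist_eq_norm]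
      have : x₀ - cm = ε⁻¹ • h₀ := by rw [hcmdef]; abel
      rw [this, ha]
      nlinarith
  have hconn : IsConnected Ω :=
    ((convex_ball cp R).inter (convex_ball cm R)).isConnected ⟨x₀, hx₀Ω⟩
  -- key norm bound
  have hbound : ∀ y : EuclideanSpace ℝ (Fin N), dist y cp ≤ R → dist y cm ≤ R → ‖y - x₀‖ ^ 2 ≤ 2 * ε + ε ^ 4 := by
    intro y h1 h2
    have e1 : y - cp = (y - x₀) - ε⁻¹ • h₀ := by rw [hcpdef]; abel
    have e2 : y - cm = (y - x₀) + ε⁻¹ • h₀ := by rw [hcmdef]; abel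
    rw [dist_eq_norm, e1] at h1
    rw [dist_eq_norm, e2] at h2
    have h1' : ‖(y - x₀) - ε⁻¹ • h₀‖ ^ 2 ≤ R ^ 2 := pow_le_pow_left₀ (norm_nonneg _) h1 2
    have h2' : ‖(y - x₀) + ε⁻¹ • h₀‖ ^ 2 ≤ R ^ 2 := pow_le_pow_left₀ (norm_nonneg _) h2 2
    rw [norm_sub_sq_real, ha] at h1'
    rw [norm_add_sq_real, ha] at h2'
    nlinarith [hR2]
  have hΩU : Ω ⊆ U := by
    intro y hy
    apply hrU
    rw [mem_ball, dist_eq_norm]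
    have h1 : dist y cp ≤ R := le_of_lt (mem_ball.mp hy.1)
    have h2 : dist y cm ≤ R := le_of_lt (mem_ball.mp hy.2)
    have hb := hbound y h1 h2
    have hb3 : ‖y - x₀‖ ^ 2 ≤ 3 * ε := by linarith
    nlinarith [norm_nonneg (y - x₀), hb3, hεr, hrpos]
  refine ⟨Ω, hΩopen, hconn, hx₀Ω, hΩU, ?_⟩
  intro y hy
  have hyclos : y ∈ closure Ω := frontier_subset_closure hy
  have hynot : y ∉ Ω := by
    rw [hΩopen.frontier_eq] at hy
    exact hy.2
  have hclosΩ : closure Ω ⊆ closedBall cp R ∩ closedBall cm R := by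
    intro z hz
    have hz' := closure_inter_subset_inter_closure _ _ hz
    rw [closure_ball cp (ne_of_gt hRpos), closure_ball cm (ne_of_gt hRpos)] at hz'
    exact hz'
  have hy1 : dist y cp ≤ R := (hclosΩ hyclos).1
  have hy2 : dist y cm ≤ R := (hclosΩ hyclos).2
  have hybnd : ‖y - x₀‖ ^ 2 ≤ 2 * ε + ε ^ 4 := hbound y hy1 hy2
  have hybnd3 : ‖y - x₀‖ ^ 2 ≤ 3 * ε := by linarith
  have hyδ : dist y x₀ < δ := by
    rw [dist_eq_norm]
    nlinarith [norm_nonneg (y - x₀), hδpos, hybnd3, hεδ]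
  have hyδ' : ε * ‖y - x₀‖ < δ := by
    have ha1 : (ε * ‖y - x₀‖) ^ 2 ≤ ε ^ 2 * (3 * ε) := by
      rw [mul_pow]
      exact mul_le_mul_of_nonneg_left hybnd3 (sq_nonneg ε)
    have ha2 : ε ^ 2 * (3 * ε) ≤ 3 * ε := by nlinarith [hε2, hε]
    nlinarith [mul_nonneg hε.le (norm_nonneg (y - x₀)), hδpos, ha1, ha2, hεδ]
  have hcases : dist y cp = R ∨ dist y cm = R := by
    by_contra h
    push_neg at h
    exact hynot ⟨mem_ball.mpr (lt_of_le_of_ne hy1 h.1), mem_ball.mpr (lt_of_le_of_ne hy2 h.2)⟩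
  rcases hcases with hc | hc
  · -- tangent to sphere around cp ; ν ≈ -h₀
    set ν : EuclideanSpace ℝ (Fin N) := ε • (y - cp) with hνdef
    have hyc : ‖y - cp‖ = R := by rw [← dist_eq_norm]; exact hc
    have hνnorm : ‖ν‖ = ε * R := by rw [hνdef, norm_smul, Real.norm_eq_abs, abs_of_pos hε, hyc]
    have hνne : ν ≠ 0 := by
      apply norm_pos_iff.mp
      rw [hνnorm]
      exact mul_pos hε hRpos
    have hν2 : ν = ε • (y - x₀) - h₀ := by
      rw [hνdef, hcpdef]
      have : y - (x₀ + ε⁻¹ • h₀) = (y - x₀) - ε⁻¹ • h₀ := by abel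
      rw [this, smul_sub, smul_smul, mul_inv_cancel₀ hεne, one_smul]
    refine ⟨ν, hνne, ?_, ?_⟩
    · have := aux_tangent_set hε hRpos hyc (fun z hz => (hclosΩ hz).1) hyclos
      rw [← hνdef] at this
      exact this
    · have hQnu : auxQ A y (fun j => ν j) = auxQ A y (fun j => (-ν) j) := by
        have : (fun j => (-ν) j) = -(fun j => ν j) := by
          funext j; simp
        rw [this, hQneg]
      show 0 < auxQ A y (fun j => ν j)
      rw [hQnu]
      apply hkey y (-ν) hyδ
      rw [dist_eq_norm]
      have : -ν - h₀ = -(ε • (y - x₀)) := by rw [hν2]; abel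
      rw [this, norm_neg, norm_smul, Real.norm_eq_abs, abs_of_pos hε]
      exact hyδ'
  · -- tangent to sphere around cm ; ν ≈ h₀
    set ν : EuclideanSpace ℝ (Fin N) := ε • (y - cm) with hνdef
    have hyc : ‖y - cm‖ = R := by rw [← dist_eq_norm]; exact hc
    have hνnorm : ‖ν‖ = ε * R := by rw [hνdef, norm_smul, Real.norm_eq_abs, abs_of_pos hε, hyc]
    have hνne : ν ≠ 0 := by
      apply norm_pos_iff.mp
      rw [hνnorm]
      exact mul_pos hε hRpos
    have hν2 : ν = ε • (y - x₀) + h₀ := by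
      rw [hνdef, hcmdef]
      have : y - (x₀ - ε⁻¹ • h₀) = (y - x₀) + ε⁻¹ • h₀ := by abel
      rw [this, smul_add, smul_smul, mul_inv_cancel₀ hεne, one_smul]
    refine ⟨ν, hνne, ?_, ?_⟩
    · have := aux_tangent_set hε hRpos hyc (fun z hz => (hclosΩ hz).2) hyclos
      rw [← hνdef] at this
      exact this
    · show 0 < auxQ A y (fun j => ν j)
      apply hkey y ν hyδ
      rw [dist_eq_norm]
      have : ν - h₀ = ε • (y - x₀) := by rw [hν2]; abel
      rw [this, norm_smul, Real.norm_eq_abs, abs_of_pos hε]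
      exact hyδ'
end
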